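/- arXiv:2107.10754 — 5 statements merged into one kernel-verified Lean document; each statement's English description precedes it below -/
import Mathlib

section
/- The map ^Jπ : ^JW → I_* ∩ ^JW^{J*} given by w ↦ w • (w*)⁻¹ is surjective; that is, for every x ∈ I_* ∩ ^JW^{J*} there exists w ∈ ^JW with x = w • (w*)⁻¹. -/
namespace DemPiAux

variable {B : Type*} {W : Type*} [Group W] {M : CoxeterMatrix B}

def DRules (cs : CoxeterSystem M W) (d : W → W → W) : Prop :=
  (∀ u v w : W, d (d u v) w = d u (d v w)) ∧
  (∀ w : W, d 1 w = w) ∧ (∀ w : W, d w 1 = w) ∧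
  (∀ (i : B) (w : W), cs.length (cs.simple i * w) = cs.length w + 1 →
    d (cs.simple i) w = cs.simple i * w) ∧
  (∀ (i : B) (w : W), cs.length (cs.simple i * w) + 1 = cs.length w →
    d (cs.simple i) w = w)

variable (cs : CoxeterSystem M W) (d : W → W → W)

theorem d_right (h : DRules cs d) :
    ∀ (u : W) (j : B),
      (cs.length (u * cs.simple j) = cs.length u + 1 → d u (cs.simple j) = u * cs.simple j) ∧
      (cs.length (u * cs.simple j) + 1 = cs.length u → d u (cs.simple j) = u) := by
  obtain ⟨ha, h1, h1r, hlt, hgt⟩ := h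
  suffices H : ∀ (n : ℕ) (u : W), cs.length u = n → ∀ (j : B),
      (cs.length (u * cs.simple j) = cs.length u + 1 → d u (cs.simple j) = u * cs.simple j) ∧
      (cs.length (u * cs.simple j) + 1 = cs.length u → d u (cs.simple j) = u) by
    intro u j; exact H (cs.length u) u rfl j
  intro n
  induction n using Nat.strong_induction_on with
  | _ n IH =>
    intro u hu j
    constructor
    · intro hasc
      rcases eq_or_ne u 1 with rfl | hne
      · rw [h1, one_mul]
      · obtain ⟨i, hi⟩ := cs.exists_leftDescent_of_ne_one hne
        rw [cs.isLeftDescent_iff] at hi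
        have hcan : cs.simple i * (cs.simple i * u) = u := cs.simple_mul_simple_cancel_left i
        have hred : cs.length (cs.simple i * (cs.simple i * u)) =
            cs.length (cs.simple i * u) + 1 := by rw [hcan]; omega
        have h1' : cs.length ((cs.simple i * u) * cs.simple j) =
            cs.length (cs.simple i * u) + 1 := by
          rcases cs.length_mul_simple (cs.simple i * u) j with hc | hc
          · exact hc
          · exfalso
            have hb : cs.length (u * cs.simple j) ≤
                cs.length ((cs.simple i * u) * cs.simple j) + 1 := by
              have := cs.length_mul_le (cs.simple i) ((cs.simple i * u) * cs.simple j)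
              rw [show cs.simple i * ((cs.simple i * u) * cs.simple j) = u * cs.simple j by
                rw [← mul_assoc, ← mul_assoc, cs.simple_mul_simple_self, one_mul],
                cs.length_simple] at this
              omega
            omega
        have IH' := IH (cs.length (cs.simple i * u)) (by omega) (cs.simple i * u) rfl j
        have hdu' := IH'.1 h1'
        calc d u (cs.simple j)
            = d (d (cs.simple i) (cs.simple i * u)) (cs.simple j) := by
              rw [hlt i (cs.simple i * u) hred, hcan]
          _ = d (cs.simple i) (d (cs.simple i * u) (cs.simple j)) := ha _ _ _
          _ = d (cs.simple i) ((cs.simple i * u) * cs.simple j) := by rw [hdu']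
          _ = cs.simple i * ((cs.simple i * u) * cs.simple j) := by
              apply hlt
              rw [show cs.simple i * (cs.simple i * u * cs.simple j) = u * cs.simple j by
                rw [← mul_assoc, ← mul_assoc, cs.simple_mul_simple_self, one_mul]]
              omega
          _ = u * cs.simple j := by
              rw [← mul_assoc, ← mul_assoc, cs.simple_mul_simple_self, one_mul]
    · intro hdesc
      have hcan : (u * cs.simple j) * cs.simple j = u := cs.simple_mul_simple_cancel_right j
      have IH' := IH (cs.length (u * cs.simple j)) (by omega) (u * cs.simple j) rfl j
      have h1' : d (u * cs.simple j) (cs.simple j) = (u * cs.simple j) * cs.simple j :=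
        IH'.1 (by rw [hcan]; omega)
      have hjj : d (cs.simple j) (cs.simple j) = cs.simple j := by
        apply hgt
        rw [cs.simple_mul_simple_self, cs.length_one, cs.length_simple]
      calc d u (cs.simple j)
          = d (d (u * cs.simple j) (cs.simple j)) (cs.simple j) := by rw [h1', hcan]
        _ = d (u * cs.simple j) (d (cs.simple j) (cs.simple j)) := ha _ _ _
        _ = d (u * cs.simple j) (cs.simple j) := by rw [hjj]
        _ = u := by rw [h1', hcan]

theorem d_lift (h : DRules cs d) {u : W} {i j : B}
    (h1 : cs.length (cs.simple i * u) = cs.length u + 1)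
    (h2 : cs.length (u * cs.simple j) = cs.length u + 1)
    (h3 : cs.length (cs.simple i * u * cs.simple j) = cs.length u) :
    cs.simple i * u = u * cs.simple j := by
  obtain ⟨ha, hol, hor, hlt, hgt⟩ := h
  have A : d (cs.simple i * u) (cs.simple j) = cs.simple i * u :=
    (d_right cs d ⟨ha, hol, hor, hlt, hgt⟩ _ j).2 (by omega)
  have B : d (cs.simple i) (u * cs.simple j) = u * cs.simple j := by
    apply hgt
    rw [← mul_assoc]
    omega
  calc cs.simple i * u = d (cs.simple i * u) (cs.simple j) := A.symm
    _ = d (d (cs.simple i) u) (cs.simple j) := by rw [hlt i u h1]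
    _ = d (cs.simple i) (d u (cs.simple j)) := ha _ _ _
    _ = d (cs.simple i) (u * cs.simple j) := by
        rw [(d_right cs d ⟨ha, hol, hor, hlt, hgt⟩ u j).1 h2]
    _ = u * cs.simple j := B

theorem d_exchange (h : DRules cs d) : ∀ ω : List B, cs.IsReduced ω → ∀ i : B,
    cs.length (cs.simple i * cs.wordProd ω) + 1 = cs.length (cs.wordProd ω) →
    ∃ ν : List B, ν.Sublist ω ∧ cs.wordProd ν = cs.simple i * cs.wordProd ω ∧
      ν.length + 1 = ω.length := by
  intro ω
  induction ω using List.reverseRecOn with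
  | nil => intro _ i hi; simp at hi
  | append_singleton ω' j IHω' =>
    intro hred i hdesc
    have hw : cs.wordProd (ω' ++ [j]) = cs.wordProd ω' * cs.simple j := by
      rw [cs.wordProd_append, cs.wordProd_singleton]
    have hlen2 : cs.length (cs.wordProd (ω' ++ [j])) = ω'.length + 1 := by
      have h0 : cs.length (cs.wordProd (ω' ++ [j])) = (ω' ++ [j]).length := hred
      simpa using h0
    have hredlen : cs.length (cs.wordProd ω' * cs.simple j) = ω'.length + 1 := by
      rw [← hw]; exact hlen2
    have hle := cs.length_wordProd_le ω'
    have hred' : cs.IsReduced ω' := by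
      rcases cs.length_mul_simple (cs.wordProd ω') j with hc | hc <;>
        · unfold CoxeterSystem.IsReduced; omega
    have hlw' : cs.length (cs.wordProd ω') = ω'.length := hred'
    rcases cs.length_simple_mul (cs.wordProd ω') i with hasc | hdesc'
    · have h3 : cs.length (cs.simple i * cs.wordProd ω' * cs.simple j) =
          cs.length (cs.wordProd ω') := by
        rw [mul_assoc, ← hw]
        omega
      have hlift := d_lift cs d h hasc (by omega) h3
      refine ⟨ω', List.sublist_append_left _ _, ?_, by simp⟩
      rw [hw, ← mul_assoc, hlift, cs.simple_mul_simple_cancel_right]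
    · obtain ⟨ν', hs, hp, hl⟩ := IHω' hred' i hdesc'
      refine ⟨ν' ++ [j], hs.append_right [j], ?_, by simp [← hl]⟩
      rw [cs.wordProd_append, cs.wordProd_singleton, hp, hw, mul_assoc]

theorem reduced_sublist (h : DRules cs d) :
    ∀ ω : List B, ∃ ν, ν.Sublist ω ∧ cs.IsReduced ν ∧ cs.wordProd ν = cs.wordProd ω := by
  intro ω
  induction ω with
  | nil => exact ⟨[], List.Sublist.refl [], by simp [CoxeterSystem.IsReduced], rfl⟩
  | cons i ω' IHω =>
    obtain ⟨ν', hs, hr, hp⟩ := IHω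
    have hrl : cs.length (cs.wordProd ν') = ν'.length := hr
    rcases cs.length_simple_mul (cs.wordProd ν') i with hasc | hdesc
    · refine ⟨i :: ν', hs.cons₂ i, ?_, ?_⟩
      · show cs.length (cs.wordProd (i :: ν')) = (i :: ν').length
        rw [cs.wordProd_cons, hasc]
        simp [hrl]
      · rw [cs.wordProd_cons, cs.wordProd_cons, hp]
    · obtain ⟨μ, hsm, hpm, hlm⟩ := d_exchange cs d h ν' hr i hdesc
      refine ⟨μ, (hsm.trans hs).trans (List.sublist_cons_self i ω'), ?_, ?_⟩
      · show cs.length (cs.wordProd μ) = μ.length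
        rw [hpm]; omega
      · rw [hpm, hp, cs.wordProd_cons]

theorem d_eq_mul_of_reduced (h : DRules cs d) :
    ∀ (n : ℕ) (u v : W), cs.length u = n →
      cs.length (u * v) = cs.length u + cs.length v → d u v = u * v := by
  obtain ⟨ha, hol, hor, hlt, hgt⟩ := h
  intro n
  induction n using Nat.strong_induction_on with
  | _ n IH =>
    intro u v hu hadd
    rcases eq_or_ne u 1 with rfl | hne
    · rw [hol, one_mul]
    · obtain ⟨i, hi⟩ := cs.exists_leftDescent_of_ne_one hne
      rw [cs.isLeftDescent_iff] at hi
      have hcan : cs.simple i * (cs.simple i * u) = u := cs.simple_mul_simple_cancel_left i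
      have hred : cs.length (cs.simple i * (cs.simple i * u)) =
          cs.length (cs.simple i * u) + 1 := by rw [hcan]; omega
      have hcanv : cs.simple i * ((cs.simple i * u) * v) = u * v := by
        rw [← mul_assoc, ← mul_assoc, cs.simple_mul_simple_self, one_mul]
      have hub : cs.length ((cs.simple i * u) * v) ≤
          cs.length (cs.simple i * u) + cs.length v := cs.length_mul_le _ _
      have hlb : cs.length (u * v) ≤ cs.length ((cs.simple i * u) * v) + 1 := by
        have := cs.length_mul_le (cs.simple i) ((cs.simple i * u) * v)
        rw [hcanv, cs.length_simple] at this
        omega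
      have hadd' : cs.length ((cs.simple i * u) * v) =
          cs.length (cs.simple i * u) + cs.length v := by omega
      have IH' := IH (cs.length (cs.simple i * u)) (by omega) (cs.simple i * u) v rfl hadd'
      calc d u v = d (d (cs.simple i) (cs.simple i * u)) v := by rw [hlt i _ hred, hcan]
        _ = d (cs.simple i) (d (cs.simple i * u) v) := ha _ _ _
        _ = d (cs.simple i) ((cs.simple i * u) * v) := by rw [IH']
        _ = cs.simple i * ((cs.simple i * u) * v) := by
            apply hlt; rw [hcanv]; omega
        _ = u * v := hcanv

theorem d_key (h : DRules cs d) :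
    ∀ (n : ℕ) (c u' : W) (i : B), cs.length c = n →
      cs.length (u' * c) = cs.length u' + cs.length c →
      cs.length (cs.simple i * u') = cs.length u' + 1 →
      cs.length (cs.simple i * (u' * c)) + 1 = cs.length (u' * c) →
      ∃ c₀ : W, u' * c = cs.simple i * (u' * c₀) ∧ cs.length c₀ + 1 = cs.length c := by
  intro n
  induction n using Nat.strong_induction_on with
  | _ n IH =>
    intro c u' i hn h1 h2 h3
    rcases eq_or_ne c 1 with rfl | hne
    · exfalso; rw [mul_one] at h3; omega
    obtain ⟨j, hj⟩ := cs.exists_leftDescent_of_ne_one hne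
    rw [cs.isLeftDescent_iff] at hj
    have huc : u' * c = (u' * cs.simple j) * (cs.simple j * c) := by
      conv_rhs => rw [← mul_assoc, mul_assoc u', cs.simple_mul_simple_self, mul_one]
    have hu'' : cs.length (u' * cs.simple j) = cs.length u' + 1 := by
      have hub := cs.length_mul_le (u' * cs.simple j) (cs.simple j * c)
      rw [← huc] at hub
      have := cs.length_mul_le u' (cs.simple j)
      rw [cs.length_simple] at this
      omega
    rcases cs.length_simple_mul (u' * cs.simple j) i with hasc | hdesc
    · have h1'' : cs.length ((u' * cs.simple j) * (cs.simple j * c)) =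
          cs.length (u' * cs.simple j) + cs.length (cs.simple j * c) := by
        rw [← huc]; omega
      have h3'' : cs.length (cs.simple i * ((u' * cs.simple j) * (cs.simple j * c))) + 1 =
          cs.length ((u' * cs.simple j) * (cs.simple j * c)) := by rw [← huc]; exact h3
      obtain ⟨c₀', he, hl⟩ := IH (cs.length (cs.simple j * c)) (by omega) (cs.simple j * c)
        (u' * cs.simple j) i rfl h1'' hasc h3''
      rcases cs.length_simple_mul c₀' j with hc | hc
      · refine ⟨cs.simple j * c₀', ?_, by omega⟩
        rw [huc, he]; group
      · exfalso
        have hb : cs.length (u' * c) ≤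
            cs.length (cs.simple i * u') + cs.length (cs.simple j * c₀') := by
          rw [show u' * c = (cs.simple i * u') * (cs.simple j * c₀') from by
            rw [huc, he]; group]
          exact cs.length_mul_le _ _
        omega
    · have hlift := d_lift cs d h h2 hu'' (by rw [mul_assoc]; omega)
      refine ⟨cs.simple j * c, ?_, by omega⟩
      rw [huc, ← hlift]; group

theorem d_prefix (h : DRules cs d) :
    ∀ (n : ℕ) (u v : W), cs.length u = n →
      ∃ c : W, d u v = u * c ∧ cs.length (u * c) = cs.length u + cs.length c := by
  obtain ⟨ha, hol, hor, hlt, hgt⟩ := h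
  intro n
  induction n using Nat.strong_induction_on with
  | _ n IH =>
    intro u v hu
    rcases eq_or_ne u 1 with rfl | hne
    · exact ⟨v, by rw [hol, one_mul], by rw [one_mul, cs.length_one]; omega⟩
    · obtain ⟨i, hi⟩ := cs.exists_leftDescent_of_ne_one hne
      rw [cs.isLeftDescent_iff] at hi
      have hcan : cs.simple i * (cs.simple i * u) = u := cs.simple_mul_simple_cancel_left i
      have hred : cs.length (cs.simple i * (cs.simple i * u)) =
          cs.length (cs.simple i * u) + 1 := by rw [hcan]; omega
      obtain ⟨c, hc1, hc2⟩ := IH (cs.length (cs.simple i * u)) (by omega) (cs.simple i * u) v rfl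
      have hsplit : d u v = d (cs.simple i) ((cs.simple i * u) * c) := by
        calc d u v = d (d (cs.simple i) (cs.simple i * u)) v := by rw [hlt i _ hred, hcan]
          _ = d (cs.simple i) (d (cs.simple i * u) v) := ha _ _ _
          _ = d (cs.simple i) ((cs.simple i * u) * c) := by rw [hc1]
      have hcanc : cs.simple i * ((cs.simple i * u) * c) = u * c := by
        rw [← mul_assoc, ← mul_assoc, cs.simple_mul_simple_self, one_mul]
      rcases cs.length_simple_mul ((cs.simple i * u) * c) i with hasc | hdesc
      · refine ⟨c, ?_, ?_⟩
        · rw [hsplit, hlt i _ hasc, hcanc]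
        · rw [← hcanc]; omega
      · obtain ⟨c₀, he, hl⟩ := d_key cs d ⟨ha, hol, hor, hlt, hgt⟩
          (cs.length c) c (cs.simple i * u) i rfl hc2 hred hdesc
        refine ⟨c₀, ?_, ?_⟩
        · rw [hsplit, hgt i _ hdesc, he, ← mul_assoc, hcan]
        · rw [← mul_assoc, hcan] at he
          rw [← he]
          omega

theorem d_absorb_left (h : DRules cs d) : ∀ ω : List B, cs.IsReduced ω → ∀ x : W,
    (∀ i ∈ ω, cs.length (cs.simple i * x) + 1 = cs.length x) →
    d (cs.wordProd ω) x = x := by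
  obtain ⟨ha, hol, hor, hlt, hgt⟩ := h
  intro ω
  induction ω with
  | nil => intro _ x _; rw [cs.wordProd_nil, hol]
  | cons i ω' IH =>
    intro hred x hdesc
    have hlen : cs.length (cs.wordProd (i :: ω')) = ω'.length + 1 := by
      have h0 : cs.length (cs.wordProd (i :: ω')) = (i :: ω').length := hred
      simpa using h0
    have hle := cs.length_wordProd_le ω'
    rw [cs.wordProd_cons] at hlen
    have hasc : cs.length (cs.simple i * cs.wordProd ω') = cs.length (cs.wordProd ω') + 1 := by
      rcases cs.length_simple_mul (cs.wordProd ω') i with hc | hc <;> omega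
    have hred' : cs.IsReduced ω' := by
      unfold CoxeterSystem.IsReduced; omega
    rw [cs.wordProd_cons]
    calc d (cs.simple i * cs.wordProd ω') x
        = d (d (cs.simple i) (cs.wordProd ω')) x := by rw [hlt i _ hasc]
      _ = d (cs.simple i) (d (cs.wordProd ω') x) := ha _ _ _
      _ = d (cs.simple i) x := by
          rw [IH hred' x (fun b hb => hdesc b (List.mem_cons_of_mem i hb))]
      _ = x := hgt i x (hdesc i List.mem_cons_self)

theorem d_absorb_right (h : DRules cs d) : ∀ ω : List B, cs.IsReduced ω → ∀ x : W,
    (∀ j ∈ ω, cs.length (x * cs.simple j) + 1 = cs.length x) →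
    d x (cs.wordProd ω) = x := by
  obtain ⟨ha, hol, hor, hlt, hgt⟩ := h
  intro ω
  induction ω using List.reverseRecOn with
  | nil => intro _ x _; rw [cs.wordProd_nil, hor]
  | append_singleton ω' j IH =>
    intro hred x hdesc
    have hw : cs.wordProd (ω' ++ [j]) = cs.wordProd ω' * cs.simple j := by
      rw [cs.wordProd_append, cs.wordProd_singleton]
    have hlen : cs.length (cs.wordProd ω' * cs.simple j) = ω'.length + 1 := by
      have h0 : cs.length (cs.wordProd (ω' ++ [j])) = (ω' ++ [j]).length := hred
      rw [hw] at h0; simpa using h0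
    have hle := cs.length_wordProd_le ω'
    have hasc : cs.length (cs.wordProd ω' * cs.simple j) = cs.length (cs.wordProd ω') + 1 := by
      rcases cs.length_mul_simple (cs.wordProd ω') j with hc | hc <;> omega
    have hred' : cs.IsReduced ω' := by
      unfold CoxeterSystem.IsReduced; omega
    rw [hw]
    calc d x (cs.wordProd ω' * cs.simple j)
        = d x (d (cs.wordProd ω') (cs.simple j)) := by
          rw [(d_right cs d ⟨ha, hol, hor, hlt, hgt⟩ (cs.wordProd ω') j).1 hasc]
      _ = d (d x (cs.wordProd ω')) (cs.simple j) := (ha _ _ _).symm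
      _ = d x (cs.simple j) := by
          rw [IH hred' x (fun b hb => hdesc b (List.mem_append_left [j] hb))]
      _ = x := (d_right cs d ⟨ha, hol, hor, hlt, hgt⟩ x j).2
          (hdesc j (List.mem_append_right ω' (List.mem_singleton_self j)))

theorem exists_word_of_mem_closure (K : Set B) :
    ∀ v ∈ Subgroup.closure (cs.simple '' K),
      ∃ ω : List B, (∀ b ∈ ω, b ∈ K) ∧ cs.wordProd ω = v := by
  intro v hv
  induction hv using Subgroup.closure_induction with
  | mem z hz =>
    obtain ⟨b, hb, rfl⟩ := hz
    exact ⟨[b], by simp [hb], cs.wordProd_singleton b⟩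
  | one => exact ⟨[], by simp, cs.wordProd_nil⟩
  | mul a b _ _ iha ihb =>
    obtain ⟨ω₁, hw1, e1⟩ := iha
    obtain ⟨ω₂, hw2, e2⟩ := ihb
    exact ⟨ω₁ ++ ω₂, fun b hb => (List.mem_append.mp hb).elim (hw1 b) (hw2 b),
      by rw [cs.wordProd_append, e1, e2]⟩
  | inv a _ ih =>
    obtain ⟨ω, hw1, e1⟩ := ih
    exact ⟨ω.reverse, fun b hb => hw1 b (List.mem_reverse.mp hb),
      by rw [cs.wordProd_reverse, e1]⟩

theorem d_inv (h : DRules cs d) :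
    ∀ (n : ℕ) (u v : W), cs.length u = n → (d u v)⁻¹ = d v⁻¹ u⁻¹ := by
  obtain ⟨ha, hol, hor, hlt, hgt⟩ := h
  intro n
  induction n using Nat.strong_induction_on with
  | _ n IH =>
    intro u v hu
    rcases eq_or_ne u 1 with rfl | hne
    · rw [hol, inv_one, hor]
    · obtain ⟨i, hi⟩ := cs.exists_leftDescent_of_ne_one hne
      rw [cs.isLeftDescent_iff] at hi
      have hcan : cs.simple i * (cs.simple i * u) = u := cs.simple_mul_simple_cancel_left i
      have hred : cs.length (cs.simple i * (cs.simple i * u)) =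
          cs.length (cs.simple i * u) + 1 := by rw [hcan]; omega
      have hsplit : d u v = d (cs.simple i) (d (cs.simple i * u) v) := by
        rw [← ha, hlt i _ hred, hcan]
      have IH' := IH (cs.length (cs.simple i * u)) (by omega) (cs.simple i * u) v rfl
      have huinv : u⁻¹ = (cs.simple i * u)⁻¹ * cs.simple i := by
        rw [mul_inv_rev, cs.inv_simple, mul_assoc, cs.simple_mul_simple_self, mul_one]
      have hred' : cs.length ((cs.simple i * u)⁻¹ * cs.simple i) =
          cs.length ((cs.simple i * u)⁻¹) + 1 := by
        rw [← huinv, cs.length_inv]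
        rw [cs.length_inv]
        omega
      have hrsplit : d v⁻¹ u⁻¹ = d (d v⁻¹ (cs.simple i * u)⁻¹) (cs.simple i) := by
        rw [ha]
        congr 1
        rw [(d_right cs d ⟨ha, hol, hor, hlt, hgt⟩ ((cs.simple i * u)⁻¹) i).1 hred', ← huinv]
      set m := d (cs.simple i * u) v with hm
      rcases cs.length_simple_mul m i with hasc | hdesc
      · rw [hsplit, hlt i m hasc, mul_inv_rev, cs.inv_simple, hrsplit, ← IH']
        exact ((d_right cs d ⟨ha, hol, hor, hlt, hgt⟩ (m⁻¹) i).1 (by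
          rw [show m⁻¹ * cs.simple i = (cs.simple i * m)⁻¹ by
            rw [mul_inv_rev, cs.inv_simple], cs.length_inv, cs.length_inv]
          omega)).symm
      · rw [hsplit, hgt i m hdesc, hrsplit, ← IH']
        exact ((d_right cs d ⟨ha, hol, hor, hlt, hgt⟩ (m⁻¹) i).2 (by
          rw [show m⁻¹ * cs.simple i = (cs.simple i * m)⁻¹ by
            rw [mul_inv_rev, cs.inv_simple], cs.length_inv, cs.length_inv]
          omega)).symm

variable (f : W ≃* W)

theorem f_word (hfs : ∀ i : B, ∃ j : B, f (cs.simple i) = cs.simple j) :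
    ∀ ω : List B, ∃ ν : List B, ν.length = ω.length ∧ f (cs.wordProd ω) = cs.wordProd ν := by
  intro ω
  induction ω with
  | nil => exact ⟨[], rfl, by rw [cs.wordProd_nil]; exact map_one f⟩
  | cons i ω' IH =>
    obtain ⟨ν, hl, hp⟩ := IH
    obtain ⟨j, hj⟩ := hfs i
    exact ⟨j :: ν, by simp [hl], by rw [cs.wordProd_cons, map_mul, hj, hp, cs.wordProd_cons]⟩

theorem length_f (hfs : ∀ i : B, ∃ j : B, f (cs.simple i) = cs.simple j)
    (hfi : ∀ w : W, f (f w) = w) : ∀ w : W, cs.length (f w) = cs.length w := by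
  have hle : ∀ w : W, cs.length (f w) ≤ cs.length w := by
    intro w
    obtain ⟨ω, hl, rfl⟩ := cs.exists_reduced_word w
    obtain ⟨ν, hlv, hp⟩ := f_word cs f hfs ω
    rw [hp]
    calc cs.length (cs.wordProd ν) ≤ ν.length := cs.length_wordProd_le ν
      _ = ω.length := hlv
      _ = cs.length (cs.wordProd ω) := by unfold CoxeterSystem.IsReduced at hl; omega
  intro w
  refine le_antisymm (hle w) ?_
  have := hle (f w)
  rwa [hfi] at this

theorem f_d (h : DRules cs d) (hfs : ∀ i : B, ∃ j : B, f (cs.simple i) = cs.simple j)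
    (hfi : ∀ w : W, f (f w) = w) :
    ∀ (n : ℕ) (u v : W), cs.length u = n → f (d u v) = d (f u) (f v) := by
  obtain ⟨ha, hol, hor, hlt, hgt⟩ := h
  intro n
  induction n using Nat.strong_induction_on with
  | _ n IH =>
    intro u v hu
    rcases eq_or_ne u 1 with rfl | hne
    · rw [hol, map_one, hol]
    · obtain ⟨i, hi⟩ := cs.exists_leftDescent_of_ne_one hne
      rw [cs.isLeftDescent_iff] at hi
      obtain ⟨j, hj⟩ := hfs i
      have hcan : cs.simple i * (cs.simple i * u) = u := cs.simple_mul_simple_cancel_left i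
      have hred : cs.length (cs.simple i * (cs.simple i * u)) =
          cs.length (cs.simple i * u) + 1 := by rw [hcan]; omega
      have hsplit : d u v = d (cs.simple i) (d (cs.simple i * u) v) := by
        rw [← ha, hlt i _ hred, hcan]
      have IH' := IH (cs.length (cs.simple i * u)) (by omega) (cs.simple i * u) v rfl
      have hfu : f u = cs.simple j * f (cs.simple i * u) := by
        rw [← hj, ← map_mul, hcan]
      have hfred : cs.length (cs.simple j * f (cs.simple i * u)) =
          cs.length (f (cs.simple i * u)) + 1 := by
        rw [← hfu, length_f cs f hfs hfi, length_f cs f hfs hfi]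
        omega
      have hrsplit : d (f u) (f v) = d (cs.simple j) (d (f (cs.simple i * u)) (f v)) := by
        rw [hfu, ← ha, hlt j _ hfred]
      set m := d (cs.simple i * u) v with hm
      rcases cs.length_simple_mul m i with hasc | hdesc
      · rw [hsplit, hlt i m hasc, hrsplit, ← IH', map_mul, hj]
        rw [hlt j (f m) (by rw [← hj, ← map_mul, length_f cs f hfs hfi,
          length_f cs f hfs hfi]; omega)]
      · rw [hsplit, hgt i m hdesc, hrsplit, ← IH']
        rw [hgt j (f m) (by rw [← hj, ← map_mul, length_f cs f hfs hfi,
          length_f cs f hfs hfi]; omega)]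

theorem d_twisted_surj (h : DRules cs d) (hfs : ∀ i : B, ∃ j : B, f (cs.simple i) = cs.simple j)
    (hfi : ∀ w : W, f (f w) = w) :
    ∀ (n : ℕ) (x : W), cs.length x = n → f x = x⁻¹ → ∃ w : W, x = d w (f w)⁻¹ := by
  obtain ⟨ha, hol, hor, hlt, hgt⟩ := h
  intro n
  induction n using Nat.strong_induction_on with
  | _ n IH =>
    intro x hx hfx
    rcases eq_or_ne x 1 with rfl | hne
    · exact ⟨1, by rw [map_one, inv_one, hol]⟩
    · obtain ⟨i, hi⟩ := cs.exists_leftDescent_of_ne_one hne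
      rw [cs.isLeftDescent_iff] at hi
      obtain ⟨j, hj⟩ := hfs i
      have hfj : f (cs.simple j) = cs.simple i := by rw [← hj, hfi]
      -- right descent at j
      have hrd : cs.length (x * cs.simple j) + 1 = cs.length x := by
        have h1 : (x * cs.simple j)⁻¹ = f (cs.simple i * x) := by
          rw [map_mul, hj, hfx, mul_inv_rev, cs.inv_simple]
        have h2 : cs.length (x * cs.simple j) = cs.length (cs.simple i * x) := by
          rw [← cs.length_inv (x * cs.simple j), h1, length_f cs f hfs hfi]
        omega
      -- key claim : x = d (σ i) (d y (σ j)) for a twisted involution y of smaller length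
      have main : ∀ y : W, cs.length y < cs.length x → f y = y⁻¹ →
          x = d (cs.simple i) (d y (cs.simple j)) → ∃ w : W, x = d w (f w)⁻¹ := by
        intro y hly hfy hxy
        obtain ⟨v, hv⟩ := IH (cs.length y) (by omega) y rfl hfy
        refine ⟨d (cs.simple i) v, ?_⟩
        have e1 : f (d (cs.simple i) v) = d (cs.simple j) (f v) := by
          rw [f_d cs d f ⟨ha, hol, hor, hlt, hgt⟩ hfs hfi (cs.length (cs.simple i))
            (cs.simple i) v rfl, hj]
        have e2 : (f (d (cs.simple i) v))⁻¹ = d (f v)⁻¹ (cs.simple j) := by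
          rw [e1, d_inv cs d ⟨ha, hol, hor, hlt, hgt⟩ (cs.length (cs.simple j))
            (cs.simple j) (f v) rfl, cs.inv_simple]
        rw [e2, ha, ← ha v, ← hv, ← hxy]
      by_cases hcomm : cs.simple i * x = x * cs.simple j
      · -- case 1 : y = σ i * x
        have hfy : f (cs.simple i * x) = (cs.simple i * x)⁻¹ := by
          rw [map_mul, hj, hfx, mul_inv_rev, cs.inv_simple]
          have := congrArg (fun z => z⁻¹) hcomm
          simp only [mul_inv_rev, cs.inv_simple] at this
          exact this.symm
        apply main (cs.simple i * x) (by omega) hfy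
        have hd1 : d (cs.simple i * x) (cs.simple j) = x := by
          have := (d_right cs d ⟨ha, hol, hor, hlt, hgt⟩ (cs.simple i * x) j).1
            (by rw [mul_assoc, ← hcomm, ← mul_assoc,
              cs.simple_mul_simple_self, one_mul]; omega)
          rw [this, mul_assoc, ← hcomm, ← mul_assoc,
            cs.simple_mul_simple_self, one_mul]
        rw [hd1]
        exact (hgt i x (by omega)).symm
      · -- case 2 : y = σ i * (x * σ j), length drops by 2
        have hdesc2 : cs.length (cs.simple i * (x * cs.simple j)) + 1 =
            cs.length (x * cs.simple j) := by
          rcases cs.length_simple_mul (x * cs.simple j) i with hc | hc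
          · exfalso
            have hlift := d_lift cs d ⟨ha, hol, hor, hlt, hgt⟩ (u := x * cs.simple j)
              (i := i) (j := j) hc (by rw [mul_assoc, cs.simple_mul_simple_self, mul_one]; omega)
              (by rw [mul_assoc, mul_assoc, cs.simple_mul_simple_self, mul_one]; omega)
            apply hcomm
            have h0 : cs.simple i * (x * cs.simple j) = x := by
              rw [hlift, mul_assoc, cs.simple_mul_simple_self, mul_one]
            have h1 := congrArg (· * cs.simple j) h0
            simpa [mul_assoc, cs.simple_mul_simple_self] using h1
          · exact hc
        set y := cs.simple i * (x * cs.simple j) with hy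
        have hycan : y * cs.simple j = cs.simple i * x := by
          rw [hy, mul_assoc, mul_assoc, cs.simple_mul_simple_self, mul_one]
        have hfy : f y = y⁻¹ := by
          rw [hy, map_mul, map_mul, hj, hfj, hfx]
          rw [mul_inv_rev, mul_inv_rev, cs.inv_simple, cs.inv_simple, mul_assoc]
        apply main y (by omega) hfy
        have hd1 : d y (cs.simple j) = cs.simple i * x := by
          rw [← hycan]
          exact (d_right cs d ⟨ha, hol, hor, hlt, hgt⟩ y j).1 (by rw [hycan]; omega)
        rw [hd1, hlt i (cs.simple i * x) (by rw [← mul_assoc,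
          cs.simple_mul_simple_self, one_mul]; omega), ← mul_assoc,
          cs.simple_mul_simple_self, one_mul]

end DemPiAux

/-- The map `ᴶπ : ᴶW → I_* ∩ ᴶW^{J⋆}`, `w ↦ w • (w⋆)⁻¹`, is surjective: for every
twisted involution `x` with `x ∈ ᴶW` and `x ∈ W^{J⋆}` there exists `w ∈ ᴶW` with
`x = w • (w⋆)⁻¹`. -/
theorem demazure_pi_J_surjective
    {B : Type*} [Finite B] {W : Type*} [Group W] {M : CoxeterMatrix B}
    (cs : CoxeterSystem M W)
    (d : W → W → W)
    (hd_assoc : ∀ u v w : W, d (d u v) w = d u (d v w))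
    (hd_one_left : ∀ w : W, d 1 w = w)
    (hd_one_right : ∀ w : W, d w 1 = w)
    (hd_simple_lt : ∀ (i : B) (w : W), cs.length (cs.simple i * w) = cs.length w + 1 →
      d (cs.simple i) w = cs.simple i * w)
    (hd_simple_gt : ∀ (i : B) (w : W), cs.length (cs.simple i * w) + 1 = cs.length w →
      d (cs.simple i) w = w)
    (f : W ≃* W)
    (hf_invol : ∀ w : W, f (f w) = w)
    (hf_simple : ∀ i : B, ∃ j : B, f (cs.simple i) = cs.simple j)
    (J : Set B)
    (hWJ_fin : ((Subgroup.closure (cs.simple '' J) : Subgroup W) : Set W).Finite)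
    (wJ : W) (hwJ_mem : wJ ∈ Subgroup.closure (cs.simple '' J))
    (hwJ_max : ∀ u ∈ Subgroup.closure (cs.simple '' J), cs.length u ≤ cs.length wJ)
    (wJs : W) (hwJs_mem : wJs ∈ Subgroup.closure (⇑f '' (cs.simple '' J)))
    (hwJs_max : ∀ u ∈ Subgroup.closure (⇑f '' (cs.simple '' J)),
      cs.length u ≤ cs.length wJs) :
    ∀ x : W, f x = x⁻¹ →
      cs.length x = cs.length wJ + cs.length (wJ * x) →
      cs.length x = cs.length wJs + cs.length (x * wJs) →
      ∃ w : W, cs.length w = cs.length wJ + cs.length (wJ * w) ∧ x = d w (f w)⁻¹ := by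
  intro x hfx hx1 hx2
  have hR : DemPiAux.DRules cs d :=
    ⟨hd_assoc, hd_one_left, hd_one_right, hd_simple_lt, hd_simple_gt⟩
  obtain ⟨w₀, hw₀⟩ :=
    DemPiAux.d_twisted_surj cs d f hR hf_simple hf_invol (cs.length x) x rfl hfx
  obtain ⟨c, hc1, hc2⟩ := DemPiAux.d_prefix cs d hR (cs.length wJ⁻¹) wJ⁻¹ w₀ rfl
  -- left descents of x at J
  have hldesc : ∀ b : B, b ∈ J → cs.length (cs.simple b * x) + 1 = cs.length x := by
    intro b hb
    have hbP : cs.simple b ∈ Subgroup.closure (cs.simple '' J) :=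
      Subgroup.subset_closure ⟨b, hb, rfl⟩
    have hwb : cs.length (wJ * cs.simple b) + 1 ≤ cs.length wJ := by
      have hne := cs.length_mul_simple_ne wJ b
      have hle := hwJ_max _ (mul_mem hwJ_mem hbP)
      omega
    have hkey : cs.length (cs.simple b * x) ≤
        cs.length (wJ * cs.simple b) + cs.length (wJ * x) := by
      have e : cs.simple b * x = (cs.simple b * wJ⁻¹) * (wJ * x) := by group
      have hmle := cs.length_mul_le (cs.simple b * wJ⁻¹) (wJ * x)
      have einv : cs.length (cs.simple b * wJ⁻¹) = cs.length (wJ * cs.simple b) := by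
        rw [← cs.length_inv (cs.simple b * wJ⁻¹), mul_inv_rev, inv_inv, cs.inv_simple]
      rw [e]
      omega
    rcases cs.length_simple_mul x b with hc | hc
    · omega
    · exact hc
  -- the index set of simples spanning W_{J*}
  have hrdesc : ∀ b : B, cs.simple b ∈ ⇑f '' (cs.simple '' J) →
      cs.length (x * cs.simple b) + 1 = cs.length x := by
    intro b hb
    have hbP : cs.simple b ∈ Subgroup.closure (⇑f '' (cs.simple '' J)) :=
      Subgroup.subset_closure hb
    have hwb : cs.length (cs.simple b * wJs) + 1 ≤ cs.length wJs := by
      have hne := cs.length_simple_mul_ne wJs b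
      have hle := hwJs_max _ (mul_mem hbP hwJs_mem)
      omega
    have hkey : cs.length (x * cs.simple b) ≤
        cs.length (x * wJs) + cs.length (cs.simple b * wJs) := by
      have e : x * cs.simple b = (x * wJs) * (wJs⁻¹ * cs.simple b) := by group
      have hmle := cs.length_mul_le (x * wJs) (wJs⁻¹ * cs.simple b)
      have einv : cs.length (wJs⁻¹ * cs.simple b) = cs.length (cs.simple b * wJs) := by
        rw [← cs.length_inv (wJs⁻¹ * cs.simple b), mul_inv_rev, inv_inv, cs.inv_simple]
      rw [e]
      omega
    rcases cs.length_mul_simple x b with hc | hc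
    · omega
    · exact hc
  -- absorption on the left by wJ⁻¹
  obtain ⟨ω₁, hω₁J, hω₁p⟩ :=
    DemPiAux.exists_word_of_mem_closure cs J wJ⁻¹ (inv_mem hwJ_mem)
  obtain ⟨ν₁, hsub₁, hred₁, hprod₁⟩ := DemPiAux.reduced_sublist cs d hR ω₁
  have habsl : d wJ⁻¹ x = x := by
    rw [← hω₁p, ← hprod₁]
    exact DemPiAux.d_absorb_left cs d hR ν₁ hred₁ x
      (fun b hb => hldesc b (hω₁J b (hsub₁.subset hb)))
  -- absorption on the right by f wJ
  have himg : ⇑f '' (cs.simple '' J) =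
      cs.simple '' {b : B | cs.simple b ∈ ⇑f '' (cs.simple '' J)} := by
    ext z
    constructor
    · rintro ⟨_, ⟨b, hb, rfl⟩, rfl⟩
      obtain ⟨j, hj⟩ := hf_simple b
      refine ⟨j, ?_, hj.symm⟩
      show cs.simple j ∈ ⇑f '' (cs.simple '' J)
      rw [← hj]
      exact ⟨cs.simple b, ⟨b, hb, rfl⟩, rfl⟩
    · rintro ⟨b, hb, rfl⟩
      exact hb
  have hfwJ : f wJ ∈ Subgroup.closure (⇑f '' (cs.simple '' J)) := by
    have hm := MonoidHom.map_closure f.toMonoidHom (cs.simple '' J)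
    rw [MulEquiv.coe_toMonoidHom] at hm
    rw [← hm]
    exact ⟨wJ, hwJ_mem, rfl⟩
  obtain ⟨ω₂, hω₂K, hω₂p⟩ :=
    DemPiAux.exists_word_of_mem_closure cs
      {b : B | cs.simple b ∈ ⇑f '' (cs.simple '' J)} (f wJ) (by rwa [← himg])
  obtain ⟨ν₂, hsub₂, hred₂, hprod₂⟩ := DemPiAux.reduced_sublist cs d hR ω₂
  have habsr : d x (f wJ) = x := by
    rw [← hω₂p, ← hprod₂]
    exact DemPiAux.d_absorb_right cs d hR ν₂ hred₂ x
      (fun b hb => hrdesc b (hω₂K b (hsub₂.subset hb)))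
  refine ⟨d wJ⁻¹ w₀, ?_, ?_⟩
  · rw [hc1, mul_inv_cancel_left, hc2, cs.length_inv]
  · have e1 : f (d wJ⁻¹ w₀) = d (f wJ)⁻¹ (f w₀) := by
      rw [DemPiAux.f_d cs d f hR hf_simple hf_invol (cs.length wJ⁻¹) wJ⁻¹ w₀ rfl, map_inv]
    have e2 : (f (d wJ⁻¹ w₀))⁻¹ = d (f w₀)⁻¹ (f wJ) := by
      rw [e1, DemPiAux.d_inv cs d hR (cs.length (f wJ)⁻¹) (f wJ)⁻¹ (f w₀) rfl, inv_inv]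
    rw [e2, hd_assoc, ← hd_assoc w₀, ← hw₀, habsr]
    exact habsl.symm
end

section
/- Let x ∈ I_* and let z be an element of minimal length in the double coset W_J x W_{J*} (i.e. z ∈ W_J x W_{J*} and ℓ(z) ≤ ℓ(y) for all y ∈ W_J x W_{J*}). Then z* = z⁻¹, i.e. z ∈ I_*. -/
namespace MinDCAux

open List

variable {B : Type*} {W : Type*} [Group W] {M : CoxeterMatrix B} (cs : CoxeterSystem M W)

local prefix:100 "s" => cs.simple
local prefix:100 "π" => cs.wordProd
local prefix:100 "ℓ" => cs.length

private lemma conj_eq_iff (a t u : W) : a * t * a⁻¹ = u ↔ t = a⁻¹ * u * a := by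
  constructor
  · intro h; rw [← h]; group
  · intro h; rw [h]; group

open Classical in
/-- The Bjorner–Brenti style permutation of `W × ℤˣ` attached to a simple reflection. -/
noncomputable def eta (i : B) : Equiv.Perm (W × ℤˣ) :=
  Function.Involutive.toPerm
    (fun p => (cs.simple i * p.1 * cs.simple i,
      if p.1 = cs.simple i then -p.2 else p.2)) (by
    rintro ⟨t, ε⟩
    have h1 : s i * (s i * t * s i) * s i = t := by
      simp only [mul_assoc, cs.simple_mul_simple_self, mul_one,
        cs.simple_mul_simple_cancel_left]
    have h2 : (s i * t * s i = s i) ↔ (t = s i) := by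
      rw [show (s i : W) * t * (s i) = (s i) * t * (s i)⁻¹ by rw [cs.inv_simple],
        conj_eq_iff (s i) t (s i), cs.inv_simple, cs.simple_mul_simple_cancel_right]
    by_cases h : t = s i
    · simp [h1, h2, h]
    · simp [h1, h2, h])

open Classical in
lemma eta_apply (i : B) (t : W) (ε : ℤˣ) :
    eta cs i (t, ε) = (s i * t * s i, if t = s i then -ε else ε) := rfl

/-- `rho i j k = (s j * s i)^k * s j`. -/
def rho (i j : B) (k : ℕ) : W := (cs.simple j * cs.simple i) ^ k * cs.simple j

private lemma semiconj (i j : B) (k : ℕ) :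
    (s j) * ((s i) * (s j)) ^ k = ((s j) * (s i)) ^ k * (s j) := by
  have h : SemiconjBy (s j) ((s i) * (s j)) ((s j) * (s i)) := by
    unfold SemiconjBy; group
  exact (h.pow_right k)

private lemma inv_pow_simple (i j : B) (k : ℕ) :
    (((s i) * (s j)) ^ k)⁻¹ = ((s j) * (s i)) ^ k := by
  rw [← inv_pow, mul_inv_rev, cs.inv_simple, cs.inv_simple]

open Classical in
lemma eta_pow (i j : B) (k : ℕ) (t : W) (ε : ℤˣ) :
    ((eta cs i * eta cs j) ^ k) (t, ε) =
      (((s i) * (s j)) ^ k * t * (((s i) * (s j)) ^ k)⁻¹,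
        ε * ∏ r ∈ Finset.range (2 * k), (if t = rho cs i j r then (-1 : ℤˣ) else 1)) := by
  induction k with
  | zero => simp
  | succ k ih =>
    rw [pow_succ', Equiv.Perm.mul_apply, ih]
    rw [Equiv.Perm.mul_apply, eta_apply, eta_apply]
    set A := ((s i) * (s j)) ^ k with hA
    have key1 : A⁻¹ * (s j) * A = rho cs i j (2 * k) := by
      rw [hA, inv_pow_simple]
      calc ((s j) * (s i)) ^ k * (s j) * ((s i) * (s j)) ^ k
          = ((s j) * (s i)) ^ k * ((s j) * ((s i) * (s j)) ^ k) := by rw [mul_assoc]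
        _ = ((s j) * (s i)) ^ k * (((s j) * (s i)) ^ k * (s j)) := by rw [semiconj]
        _ = rho cs i j (2 * k) := by rw [← mul_assoc, ← pow_add, rho, two_mul]
    have hcond1 : (A * t * A⁻¹ = s j) ↔ (t = rho cs i j (2 * k)) := by
      rw [conj_eq_iff, key1]
    have hcond2 : ((s j) * (A * t * A⁻¹) * (s j) = s i) ↔ (t = rho cs i j (2 * k + 1)) := by
      have e0 : (s j) * (A * t * A⁻¹) * (s j) = ((s j) * A) * t * ((s j) * A)⁻¹ := by
        rw [mul_inv_rev, cs.inv_simple]; group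
      have e2 : ((s j) * A)⁻¹ * (s i) * ((s j) * A) = rho cs i j (2 * k + 1) := by
        rw [mul_inv_rev, cs.inv_simple, hA, inv_pow_simple]
        calc ((s j) * (s i)) ^ k * (s j) * (s i) * ((s j) * ((s i) * (s j)) ^ k)
            = ((s j) * (s i)) ^ k * ((s j) * (s i)) * ((s j) * ((s i) * (s j)) ^ k) := by
              rw [mul_assoc (((s j) * (s i)) ^ k)]
          _ = ((s j) * (s i)) ^ (k + 1) * ((s j) * ((s i) * (s j)) ^ k) := by rw [pow_succ]
          _ = ((s j) * (s i)) ^ (k + 1) * (((s j) * (s i)) ^ k * (s j)) := by rw [semiconj]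
          _ = rho cs i j (2 * k + 1) := by
              rw [← mul_assoc, ← pow_add, rho]
              congr 2
              omega
      rw [e0, conj_eq_iff, e2]
    have hfirst : (s i) * ((s j) * (A * t * A⁻¹) * (s j)) * (s i)
        = ((s i) * (s j)) ^ (k + 1) * t * (((s i) * (s j)) ^ (k + 1))⁻¹ := by
      rw [pow_succ', mul_inv_rev, mul_inv_rev, cs.inv_simple, cs.inv_simple]
      simp only [mul_assoc, hA]
    have hsign : ∏ r ∈ Finset.range (2 * (k + 1)),
          (if t = rho cs i j r then (-1 : ℤˣ) else 1)
        = (∏ r ∈ Finset.range (2 * k), (if t = rho cs i j r then (-1 : ℤˣ) else 1))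
          * (if t = rho cs i j (2 * k) then (-1 : ℤˣ) else 1)
          * (if t = rho cs i j (2 * k + 1) then (-1 : ℤˣ) else 1) := by
      have : 2 * (k + 1) = (2 * k + 1) + 1 := by ring
      rw [this, Finset.prod_range_succ, Finset.prod_range_succ]
    rw [hsign]
    refine Prod.ext hfirst ?_
    simp only [hcond1, hcond2]
    split_ifs <;> simp [mul_neg, neg_mul, neg_neg, mul_comm, mul_assoc, mul_left_comm]

open Classical in
lemma eta_liftable : M.IsLiftable (eta cs) := by
  intro i j
  apply Equiv.ext
  rintro ⟨t, ε⟩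
  set m := M i j with hm
  rw [eta_pow]
  have h1 : ((s i) * (s j)) ^ m = 1 := cs.simple_mul_simple_pow i j
  have h2 : ((s j) * (s i)) ^ m = 1 := cs.simple_mul_simple_pow' i j
  have hrho : ∀ r, rho cs i j (m + r) = rho cs i j r := by
    intro r
    rw [rho, rho, add_comm, pow_add, h2, mul_one]
  have hsign : ∏ r ∈ Finset.range (2 * m),
      (if t = rho cs i j r then (-1 : ℤˣ) else 1) = 1 := by
    have h2m : 2 * m = m + m := by ring
    rw [h2m, Finset.prod_range_add]
    have : ∀ r, (if t = rho cs i j (m + r) then (-1 : ℤˣ) else 1)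
        = (if t = rho cs i j r then (-1 : ℤˣ) else 1) := by
      intro r; rw [hrho]
    rw [Finset.prod_congr rfl (fun r _ => this r), ← Finset.prod_mul_distrib]
    apply Finset.prod_eq_one
    intro r _
    by_cases h : t = rho cs i j r <;> simp [h]
  rw [h1, hsign]
  simp

/-- The permutation representation of `W` on `W × ℤˣ`. -/
noncomputable def pRep : W →* Equiv.Perm (W × ℤˣ) := cs.lift ⟨eta cs, eta_liftable cs⟩

lemma pRep_simple (i : B) : pRep cs (s i) = eta cs i := cs.lift_apply_simple (eta_liftable cs) i

open Classical in
/-- The sign of `t` relative to the right inversion sequence of `ω`. -/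
noncomputable def wsign (ω : List B) (t : W) : ℤˣ :=
  ((cs.rightInvSeq ω).map (fun u => if t = u then (-1 : ℤˣ) else 1)).prod

open Classical in
lemma pRep_wordProd (ω : List B) (t : W) (ε : ℤˣ) :
    pRep cs (π ω) (t, ε) = (π ω * t * (π ω)⁻¹, ε * wsign cs ω t) := by
  induction ω generalizing t ε with
  | nil => simp [wsign]
  | cons i ω ih =>
    rw [cs.wordProd_cons, map_mul, Equiv.Perm.mul_apply, ih, pRep_simple, eta_apply]
    have hris : cs.rightInvSeq (i :: ω) = ((π ω)⁻¹ * (s i) * (π ω)) :: cs.rightInvSeq ω := rfl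
    have hcond : (π ω * t * (π ω)⁻¹ = s i) ↔ (t = (π ω)⁻¹ * (s i) * (π ω)) := by
      rw [conj_eq_iff]
    have hfirst : (s i) * (π ω * t * (π ω)⁻¹) * (s i)
        = ((s i) * π ω) * t * ((s i) * π ω)⁻¹ := by
      rw [mul_inv_rev, cs.inv_simple]; simp only [mul_assoc]
    have hs : wsign cs (i :: ω) t
        = (if t = (π ω)⁻¹ * (s i) * (π ω) then (-1 : ℤˣ) else 1) * wsign cs ω t := by
      rw [wsign, hris, List.map_cons, List.prod_cons]; rfl
    refine Prod.ext ?_ ?_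
    · simpa using hfirst
    · simp only [hs, hcond]
      split_ifs <;> simp [mul_neg, neg_mul, neg_neg, mul_comm, mul_assoc, mul_left_comm]

/-- `nn w t = -1` iff `t` is a "right inversion" of `w` counted with parity. -/
noncomputable def nn (w t : W) : ℤˣ := ((pRep cs w) (t, 1)).2

lemma nn_eq_wsign {ω : List B} {w : W} (h : π ω = w) (t : W) : nn cs w t = wsign cs ω t := by
  subst h; rw [nn, pRep_wordProd]; simp

lemma pRep_apply (w t : W) (ε : ℤˣ) :
    pRep cs w (t, ε) = (w * t * w⁻¹, ε * nn cs w t) := by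
  obtain ⟨ω, rfl⟩ := cs.wordProd_surjective w
  rw [pRep_wordProd, nn_eq_wsign cs rfl]

lemma nn_mul (w v t : W) : nn cs (w * v) t = nn cs v t * nn cs w (v * t * v⁻¹) := by
  have : pRep cs (w * v) (t, 1) = pRep cs w (pRep cs v (t, 1)) := by
    rw [map_mul, Equiv.Perm.mul_apply]
  rw [nn, this, pRep_apply cs v t 1, pRep_apply, one_mul]

open Classical in
lemma nn_simple (i : B) (t : W) : nn cs (s i) t = if t = s i then (-1 : ℤˣ) else 1 := by
  rw [nn, pRep_simple, eta_apply]

lemma nn_one (t : W) : nn cs 1 t = 1 := by rw [nn, map_one]; rfl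

lemma nn_reflection {t : W} (ht : cs.IsReflection t) : nn cs t t = -1 := by
  obtain ⟨w, i, rfl⟩ := ht
  set t := w * (s i) * w⁻¹ with hdef
  have e1 : w⁻¹ * t * (w⁻¹)⁻¹ = s i := by rw [hdef]; group
  have h1 : nn cs w⁻¹ t * nn cs w (s i) = 1 := by
    have := nn_mul cs w w⁻¹ t
    rw [mul_inv_cancel, nn_one, e1] at this
    exact this.symm
  have h2 : nn cs ((s i) * w⁻¹) t = - nn cs w⁻¹ t := by
    rw [nn_mul cs (s i) w⁻¹ t, e1, nn_simple]
    simp [mul_comm]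
  have e3 : ((s i) * w⁻¹) * t * ((s i) * w⁻¹)⁻¹ = s i := by
    rw [hdef, mul_inv_rev, inv_inv, cs.inv_simple]
    simp only [mul_assoc, inv_mul_cancel_left, cs.simple_mul_simple_cancel_left]
  have h3 : nn cs t t = nn cs ((s i) * w⁻¹) t * nn cs w (s i) := by
    have e4 : w * ((s i) * w⁻¹) = t := by rw [hdef]; group
    have := nn_mul cs w ((s i) * w⁻¹) t
    rw [e4, e3] at this
    exact this
  rw [h3, h2, neg_mul, h1]

open Classical in
lemma wsign_eq_one_of_not_mem (ω : List B) (t : W) (h : t ∉ cs.rightInvSeq ω) :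
    wsign cs ω t = 1 := by
  apply List.prod_eq_one
  intro x hx
  rw [List.mem_map] at hx
  obtain ⟨u, hu, rfl⟩ := hx
  rw [if_neg]
  intro rfl'
  exact h (rfl' ▸ hu)

lemma length_lt_of_nn_neg {w t : W} (hn : nn cs w t = -1) : ℓ (w * t) < ℓ w := by
  obtain ⟨ω, hred, rfl⟩ := cs.exists_reduced_word' w
  have hmem : t ∈ cs.rightInvSeq ω := by
    by_contra hmem
    rw [nn_eq_wsign cs rfl, wsign_eq_one_of_not_mem cs ω t hmem] at hn
    exact absurd hn (by decide)
  exact (cs.isRightInversion_of_mem_rightInvSeq hred hmem).2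

lemma nn_neg_of_length_lt {w t : W} (ht : cs.IsReflection t) (h : ℓ (w * t) < ℓ w) :
    nn cs w t = -1 := by
  by_contra hn
  have h1 : nn cs w t = 1 := by
    rcases Int.units_eq_one_or (nn cs w t) with h' | h'
    · exact h'
    · exact absurd h' hn
  have e : t * t * t⁻¹ = t := by group
  have h2 : nn cs (w * t) t = -1 := by
    rw [nn_mul, e, nn_reflection cs ht, h1, mul_one]
  have := length_lt_of_nn_neg cs h2
  rw [mul_assoc, ht.mul_self, mul_one] at this
  omega

lemma mem_rightInvSeq_of_length_lt {ω : List B} {w t : W} (hπ : π ω = w)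
    (ht : cs.IsReflection t) (h : ℓ (w * t) < ℓ w) : t ∈ cs.rightInvSeq ω := by
  have hn : nn cs w t = -1 := nn_neg_of_length_lt cs ht h
  by_contra hmem
  rw [nn_eq_wsign cs hπ, wsign_eq_one_of_not_mem cs ω t hmem] at hn
  exact absurd hn (by decide)

/-- Right exchange property. -/
lemma exchange_right (ω : List B) (i : B) (h : ℓ (π ω * (s i)) < ℓ (π ω)) :
    ∃ j < ω.length, π ω * (s i) = π (ω.eraseIdx j) := by
  have hmem : (s i) ∈ cs.rightInvSeq ω :=
    mem_rightInvSeq_of_length_lt cs rfl (cs.isReflection_simple i) h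
  rw [List.mem_iff_getElem] at hmem
  obtain ⟨j, hj, hjeq⟩ := hmem
  rw [cs.length_rightInvSeq] at hj
  refine ⟨j, hj, ?_⟩
  have := cs.wordProd_mul_getD_rightInvSeq ω j
  rwa [List.getD_eq_getElem _ _ (by rw [cs.length_rightInvSeq]; exact hj), hjeq] at this

/-- Left exchange property. -/
lemma exchange_left (ω : List B) (i : B) (h : ℓ ((s i) * π ω) < ℓ (π ω)) :
    ∃ j < ω.length, (s i) * π ω = π (ω.eraseIdx j) := by
  have h' : ℓ (π ω.reverse * (s i)) < ℓ (π ω.reverse) := by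
    rw [cs.wordProd_reverse]
    have e : (π ω)⁻¹ * (s i) = ((s i) * π ω)⁻¹ := by
      rw [mul_inv_rev, cs.inv_simple]
    rw [e, cs.length_inv, cs.length_inv]
    exact h
  have hmem : (s i) ∈ cs.rightInvSeq ω.reverse :=
    mem_rightInvSeq_of_length_lt cs rfl (cs.isReflection_simple i) h'
  rw [cs.rightInvSeq_reverse, List.mem_reverse] at hmem
  rw [List.mem_iff_getElem] at hmem
  obtain ⟨j, hj, hjeq⟩ := hmem
  rw [cs.length_leftInvSeq] at hj
  refine ⟨j, hj, ?_⟩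
  have := cs.getD_leftInvSeq_mul_wordProd ω j
  rwa [List.getD_eq_getElem _ _ (by rw [cs.length_leftInvSeq]; exact hj), hjeq] at this

section Parabolic

variable (K : Set B)

lemma wordProd_mem_closure (ω : List B) (h : ∀ i ∈ ω, i ∈ K) :
    π ω ∈ Subgroup.closure (cs.simple '' K) := by
  induction ω with
  | nil => rw [cs.wordProd_nil]; exact one_mem _
  | cons i ω ih =>
    rw [cs.wordProd_cons]
    exact mul_mem (Subgroup.subset_closure ⟨i, h i (List.mem_cons_self), rfl⟩)
      (ih (fun j hj => h j (List.mem_cons_of_mem i hj)))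

lemma exists_word_of_mem_closure {w : W} (hw : w ∈ Subgroup.closure (cs.simple '' K)) :
    ∃ ω : List B, (∀ i ∈ ω, i ∈ K) ∧ π ω = w := by
  induction hw using Subgroup.closure_induction with
  | mem x hx =>
    obtain ⟨i, hi, rfl⟩ := hx
    exact ⟨[i], by simpa using hi, cs.wordProd_singleton i⟩
  | one => exact ⟨[], by simp, cs.wordProd_nil⟩
  | mul x y _ _ hx hy =>
    obtain ⟨ω₁, h₁, rfl⟩ := hx
    obtain ⟨ω₂, h₂, rfl⟩ := hy
    exact ⟨ω₁ ++ ω₂, by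
      intro i hi
      rcases List.mem_append.mp hi with h | h
      exacts [h₁ i h, h₂ i h], cs.wordProd_append ω₁ ω₂⟩
  | inv x _ hx =>
    obtain ⟨ω, h₁, rfl⟩ := hx
    exact ⟨ω.reverse, fun i hi => h₁ i (List.mem_reverse.mp hi), cs.wordProd_reverse ω⟩

lemma exists_reduced_subword : ∀ (n : ℕ) (ω : List B), ω.length ≤ n →
    ∃ ω' : List B, cs.IsReduced ω' ∧ π ω' = π ω ∧ ∀ i ∈ ω', i ∈ ω := by
  intro n
  induction n with
  | zero =>
    intro ω hω
    rw [Nat.le_zero, List.length_eq_zero_iff] at hω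
    subst hω
    exact ⟨[], by simp [CoxeterSystem.IsReduced], rfl, by simp⟩
  | succ n ih =>
    intro ω hω
    rcases List.eq_nil_or_concat ω with rfl | ⟨ω₀, i, rfl⟩
    · exact ⟨[], by simp [CoxeterSystem.IsReduced], rfl, by simp⟩
    · have hω₀ : ω₀.length ≤ n := by
        rw [List.concat_eq_append, List.length_append, List.length_singleton] at hω
        omega
      obtain ⟨ω₀', hred, hprod, hsub⟩ := ih ω₀ hω₀
      have hπ : π (ω₀.concat i) = π ω₀' * (s i) := by
        rw [cs.wordProd_concat, hprod]
      rcases Nat.lt_or_ge (ℓ (π ω₀' * (s i))) (ℓ (π ω₀')) with hlt | hge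
      · -- not reduced : exchange and recurse
        obtain ⟨j, hj, heq⟩ := exchange_right cs ω₀' i hlt
        have hlen : (ω₀'.eraseIdx j).length ≤ n := by
          have h1 : (ω₀'.eraseIdx j).length ≤ ω₀'.length := List.length_eraseIdx_le _ _
          have h2 : ω₀'.length = ℓ (π ω₀') := hred.symm
          have h3 : ℓ (π ω₀') = ℓ (π ω₀) := by rw [hprod]
          have h4 : ℓ (π ω₀) ≤ ω₀.length := cs.length_wordProd_le ω₀
          omega
        obtain ⟨ω'', hred'', hprod'', hsub''⟩ := ih (ω₀'.eraseIdx j) hlen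
        refine ⟨ω'', hred'', ?_, ?_⟩
        · rw [hprod'', ← heq, hπ]
        · intro a ha
          have := List.eraseIdx_subset (hsub'' a ha)
          rw [List.concat_eq_append]
          exact List.mem_append_left _ (hsub a this)
      · -- reduced extension
        have hne := cs.length_mul_simple_ne (π ω₀') i
        have hup : ℓ (π ω₀' * (s i)) = ℓ (π ω₀') + 1 := by
          rcases cs.length_mul_simple (π ω₀') i with h | h
          · exact h
          · omega
        refine ⟨ω₀' ++ [i], ?_, ?_, ?_⟩
        · rw [CoxeterSystem.IsReduced, cs.wordProd_append, cs.wordProd_singleton,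
            hup, List.length_append, List.length_singleton, hred]
        · rw [cs.wordProd_append, cs.wordProd_singleton, hπ]
        · intro a ha
          rw [List.concat_eq_append]
          rcases List.mem_append.mp ha with h | h
          · exact List.mem_append_left _ (hsub a h)
          · exact List.mem_append_right _ h

lemma exists_reduced_word_subset {w : W} (hw : w ∈ Subgroup.closure (cs.simple '' K)) :
    ∃ ω : List B, cs.IsReduced ω ∧ π ω = w ∧ ∀ i ∈ ω, i ∈ K := by
  obtain ⟨ω, hK, rfl⟩ := exists_word_of_mem_closure cs K hw
  obtain ⟨ω', hred, hprod, hsub⟩ := exists_reduced_subword cs ω.length ω le_rfl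
  exact ⟨ω', hred, hprod, fun i hi => hK i (hsub i hi)⟩

lemma peel_right {w : W} (hw : w ∈ Subgroup.closure (cs.simple '' K)) (hne : w ≠ 1) :
    ∃ i ∈ K, ∃ w' ∈ Subgroup.closure (cs.simple '' K),
      w = w' * (s i) ∧ ℓ w = ℓ w' + 1 := by
  obtain ⟨ω, hred, rfl, hK⟩ := exists_reduced_word_subset cs K hw
  rcases List.eq_nil_or_concat ω with rfl | ⟨ω₀, i, rfl⟩
  · exact absurd (cs.wordProd_nil) hne
  · rw [List.concat_eq_append] at *
    refine ⟨i, hK i (List.mem_append_right _ (List.mem_singleton_self i)), π ω₀, ?_, ?_, ?_⟩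
    · exact wordProd_mem_closure cs K ω₀ (fun a ha => hK a (List.mem_append_left _ ha))
    · rw [cs.wordProd_append, cs.wordProd_singleton]
    · have hred₀ : cs.IsReduced ω₀ := by
        have := hred.take ω₀.length
        rwa [List.take_left] at this
      rw [CoxeterSystem.IsReduced] at hred hred₀
      rw [hred, hred₀, List.length_append, List.length_singleton]

lemma peel_left {w : W} (hw : w ∈ Subgroup.closure (cs.simple '' K)) (hne : w ≠ 1) :
    ∃ i ∈ K, ∃ w' ∈ Subgroup.closure (cs.simple '' K),
      w = (s i) * w' ∧ ℓ w = ℓ w' + 1 := by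
  obtain ⟨ω, hred, rfl, hK⟩ := exists_reduced_word_subset cs K hw
  rcases ω with _ | ⟨i, ω₀⟩
  · exact absurd (cs.wordProd_nil) hne
  · refine ⟨i, hK i (List.mem_cons_self), π ω₀, ?_, ?_, ?_⟩
    · exact wordProd_mem_closure cs K ω₀ (fun a ha => hK a (List.mem_cons_of_mem i ha))
    · rw [cs.wordProd_cons]
    · have hred₀ : cs.IsReduced ω₀ := by
        have := hred.drop 1
        simpa using this
      rw [CoxeterSystem.IsReduced] at hred hred₀
      rw [hred, hred₀, List.length_cons]

end Parabolic

section DoubleCoset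

variable {Js Ks : Set B} {z : W}

/-- If `z` has minimal length in its double coset, right multiplication adds lengths. -/
lemma length_mul_right_coset
    (hmin : ∀ u ∈ Subgroup.closure (cs.simple '' Js), ∀ v ∈ Subgroup.closure (cs.simple '' Ks),
      ℓ z ≤ ℓ (u * z * v)) :
    ∀ v ∈ Subgroup.closure (cs.simple '' Ks), ℓ (z * v) = ℓ z + ℓ v := by
  suffices h : ∀ (n : ℕ), ∀ v ∈ Subgroup.closure (cs.simple '' Ks), ℓ v ≤ n →
      ℓ (z * v) = ℓ z + ℓ v by
    intro v hv
    exact h (ℓ v) v hv le_rfl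
  intro n
  induction n with
  | zero =>
    intro v hv hle
    rw [Nat.le_zero] at hle
    rw [cs.length_eq_zero_iff] at hle
    subst hle
    simp
  | succ n ih =>
    intro v hv hle
    by_cases h1 : v = 1
    · subst h1; simp
    obtain ⟨i, hiK, v', hv', rfl, hlv⟩ := peel_right cs Ks hv h1
    have hlv' : ℓ v' ≤ n := by omega
    have ihv : ℓ (z * v') = ℓ z + ℓ v' := ih v' hv' hlv'
    rcases cs.length_mul_simple (z * v') i with hup | hdown
    · rw [← mul_assoc, hup, ihv, hlv]
      omega
    · -- contradiction
      exfalso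
      have hlt : ℓ ((z * v') * (s i)) < ℓ (z * v') := by omega
      obtain ⟨ωz, hzlen, hzword⟩ := cs.exists_reduced_word z
      rw [CoxeterSystem.IsReduced, ← hzword] at hzlen
      obtain ⟨ω', hred', hprod', hK'⟩ := exists_reduced_word_subset cs Ks hv'
      have hΩprod : π (ωz ++ ω') = z * v' := by
        rw [cs.wordProd_append, ← hzword, hprod']
      have hΩlt : ℓ (π (ωz ++ ω') * (s i)) < ℓ (π (ωz ++ ω')) := by rw [hΩprod]; exact hlt
      obtain ⟨j, hj, heq⟩ := exchange_right cs (ωz ++ ω') i hΩlt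
      rw [hΩprod] at heq
      by_cases hjz : j < ωz.length
      · -- erased in the z part
        rw [List.eraseIdx_append_of_lt_length hjz, cs.wordProd_append, hprod'] at heq
        set zhat := π (ωz.eraseIdx j) with hzhat
        have hz2 : z * (v' * (s i) * v'⁻¹) = zhat := by
          have e : z * (v' * (s i) * v'⁻¹) = (z * v' * (s i)) * v'⁻¹ := by group
          rw [e, heq]; group
        have hmem2 : v' * (s i) * v'⁻¹ ∈ Subgroup.closure (cs.simple '' Ks) :=
          mul_mem (mul_mem hv' (Subgroup.subset_closure ⟨i, hiK, rfl⟩)) (inv_mem hv')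
        have := hmin 1 (one_mem _) (v' * (s i) * v'⁻¹) hmem2
        rw [one_mul, hz2] at this
        have hbound : ℓ zhat ≤ (ωz.eraseIdx j).length := cs.length_wordProd_le _
        have hel : (ωz.eraseIdx j).length + 1 = ωz.length := List.length_eraseIdx_add_one hjz
        omega
      · -- erased in the v' part
        push_neg at hjz
        rw [List.eraseIdx_append_of_length_le hjz, cs.wordProd_append, ← hzword] at heq
        have hc : v' * (s i) = π (ω'.eraseIdx (j - ωz.length)) := by
          rw [mul_assoc] at heq
          exact mul_left_cancel heq
        have hj2 : j - ωz.length < ω'.length := by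
          rw [List.length_append] at hj
          omega
        have hbound : ℓ (v' * (s i)) ≤ (ω'.eraseIdx (j - ωz.length)).length :=
          hc ▸ cs.length_wordProd_le _
        have hel : (ω'.eraseIdx (j - ωz.length)).length + 1 = ω'.length :=
          List.length_eraseIdx_add_one hj2
        rw [CoxeterSystem.IsReduced] at hred'
        rw [hprod'] at hred'
        omega

/-- Every element of the double coset of a minimal element `z` admits a
representation with additive lengths. -/
lemma exists_rep_lengths_add
    (hmin : ∀ u ∈ Subgroup.closure (cs.simple '' Js), ∀ v ∈ Subgroup.closure (cs.simple '' Ks),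
      ℓ z ≤ ℓ (u * z * v)) :
    ∀ u ∈ Subgroup.closure (cs.simple '' Js), ∀ v ∈ Subgroup.closure (cs.simple '' Ks),
      ∃ u' ∈ Subgroup.closure (cs.simple '' Js), ∃ v' ∈ Subgroup.closure (cs.simple '' Ks),
        u * z * v = u' * z * v' ∧ ℓ (u' * z * v') = ℓ u' + ℓ z + ℓ v' := by
  suffices h : ∀ (n : ℕ), ∀ u ∈ Subgroup.closure (cs.simple '' Js), ℓ u ≤ n →
      ∀ v ∈ Subgroup.closure (cs.simple '' Ks),
      ∃ u' ∈ Subgroup.closure (cs.simple '' Js), ∃ v' ∈ Subgroup.closure (cs.simple '' Ks),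
        u * z * v = u' * z * v' ∧ ℓ (u' * z * v') = ℓ u' + ℓ z + ℓ v' by
    intro u hu v hv
    exact h (ℓ u) u hu le_rfl v hv
  have base : ∀ v ∈ Subgroup.closure (cs.simple '' Ks),
      ∃ u' ∈ Subgroup.closure (cs.simple '' Js), ∃ v' ∈ Subgroup.closure (cs.simple '' Ks),
        1 * z * v = u' * z * v' ∧ ℓ (u' * z * v') = ℓ u' + ℓ z + ℓ v' := by
    intro v hv
    refine ⟨1, one_mem _, v, hv, rfl, ?_⟩
    rw [one_mul, cs.length_one, length_mul_right_coset cs hmin v hv]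
    omega
  intro n
  induction n with
  | zero =>
    intro u hu hle v hv
    rw [Nat.le_zero, cs.length_eq_zero_iff] at hle
    subst hle
    exact base v hv
  | succ n ih =>
    intro u hu hle v hv
    by_cases h1 : u = 1
    · subst h1; exact base v hv
    obtain ⟨i, hiJ, u'', hu'', rfl, hlu⟩ := peel_left cs Js hu h1
    have ihres := ih u'' hu'' (by omega) v hv
    obtain ⟨u₁, hu₁, v₁, hv₁, heq₁, hlen₁⟩ := ihres
    set y := u₁ * z * v₁ with hy
    have hkey : (s i) * u'' * z * v = (s i) * y := by
      rw [← heq₁]; group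
    rcases cs.length_simple_mul y i with hup | hdown
    · -- length goes up : prepend to u₁
      have hsiu : ℓ ((s i) * u₁) = ℓ u₁ + 1 := by
        rcases cs.length_simple_mul u₁ i with h' | h'
        · exact h'
        · exfalso
          have hb1 : ℓ ((s i) * y) ≤ ℓ ((s i) * u₁ * z) + ℓ v₁ := by
            have := cs.length_mul_le ((s i) * u₁ * z) v₁
            rw [hy]
            calc ℓ ((s i) * (u₁ * z * v₁)) = ℓ ((s i) * u₁ * z * v₁) := by
                  rw [← mul_assoc, ← mul_assoc]
              _ ≤ ℓ ((s i) * u₁ * z) + ℓ v₁ := this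
          have hb2 : ℓ ((s i) * u₁ * z) ≤ ℓ ((s i) * u₁) + ℓ z := cs.length_mul_le _ _
          omega
      refine ⟨(s i) * u₁, mul_mem (Subgroup.subset_closure ⟨i, hiJ, rfl⟩) hu₁, v₁, hv₁, ?_, ?_⟩
      · rw [hkey, hy]; group
      · have e : (s i) * u₁ * z * v₁ = (s i) * y := by rw [hy]; group
        rw [e, hup, hsiu, hlen₁]
        omega
    · -- length goes down : exchange
      have hydown : ℓ ((s i) * y) < ℓ y := by omega
      obtain ⟨ω₁, hred₁, hprod₁, hJ₁⟩ := exists_reduced_word_subset cs Js hu₁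
      obtain ⟨ωz, hzlen, hzword⟩ := cs.exists_reduced_word z
      rw [CoxeterSystem.IsReduced, ← hzword] at hzlen
      obtain ⟨ω₂, hred₂, hprod₂, hK₂⟩ := exists_reduced_word_subset cs Ks hv₁
      set Ω := ω₁ ++ (ωz ++ ω₂) with hΩ
      have hΩprod : π Ω = y := by
        rw [hΩ, cs.wordProd_append, cs.wordProd_append, hprod₁, ← hzword, hprod₂, hy,
          mul_assoc]
      have hΩlen : Ω.length = ℓ u₁ + ℓ z + ℓ v₁ := by
        rw [hΩ, List.length_append, List.length_append]
        rw [CoxeterSystem.IsReduced] at hred₁ hred₂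
        rw [hprod₁] at hred₁
        rw [hprod₂] at hred₂
        omega
      have hΩlt : ℓ ((s i) * π Ω) < ℓ (π Ω) := by rw [hΩprod]; exact hydown
      obtain ⟨j, hj, heq⟩ := exchange_left cs Ω i hΩlt
      rw [hΩprod] at heq
      have hσ : ℓ ((s i) * y) = ℓ u₁ + ℓ z + ℓ v₁ - 1 ∧ 1 ≤ ℓ u₁ + ℓ z + ℓ v₁ := by
        constructor <;> omega
      by_cases hj1 : j < ω₁.length
      · -- erase in u₁ part
        rw [hΩ, List.eraseIdx_append_of_lt_length hj1, cs.wordProd_append,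
          cs.wordProd_append, ← hzword, hprod₂] at heq
        set uhat := π (ω₁.eraseIdx j) with huhat
        have huhatmem : uhat ∈ Subgroup.closure (cs.simple '' Js) :=
          wordProd_mem_closure cs Js _
            (fun a ha => hJ₁ a (List.eraseIdx_subset ha))
        have hbound : ℓ uhat ≤ (ω₁.eraseIdx j).length := cs.length_wordProd_le _
        have hel : (ω₁.eraseIdx j).length + 1 = ω₁.length := List.length_eraseIdx_add_one hj1
        have hl1 : ω₁.length = ℓ u₁ := by
          rw [CoxeterSystem.IsReduced] at hred₁
          rw [hprod₁] at hred₁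
          omega
        refine ⟨uhat, huhatmem, v₁, hv₁, ?_, ?_⟩
        · rw [hkey, heq]; group
        · have e2 : uhat * z * v₁ = (s i) * y := by rw [heq]; group
          have hb3 : ℓ (uhat * z * v₁) ≤ ℓ uhat + ℓ z + ℓ v₁ := by
            have b1 := cs.length_mul_le (uhat * z) v₁
            have b2 := cs.length_mul_le uhat z
            omega
          have e5 : ℓ (uhat * z * v₁) = ℓ ((s i) * y) := by rw [e2]
          omega
      · push_neg at hj1
        rw [hΩ, List.eraseIdx_append_of_length_le hj1] at heq
        set j' := j - ω₁.length with hj'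
        have hj'lt : j' < ωz.length + ω₂.length := by
          rw [hΩ, List.length_append, List.length_append] at hj
          omega
        by_cases hj2 : j' < ωz.length
        · -- erase in z part : contradiction with minimality
          exfalso
          rw [List.eraseIdx_append_of_lt_length hj2, cs.wordProd_append,
            cs.wordProd_append, hprod₁, hprod₂] at heq
          set zhat := π (ωz.eraseIdx j') with hzhat
          have hbound : ℓ zhat ≤ (ωz.eraseIdx j').length := cs.length_wordProd_le _
          have hel : (ωz.eraseIdx j').length + 1 = ωz.length := List.length_eraseIdx_add_one hj2
          -- s i * y = u₁ * (zhat * v₁), and s i * y = s i * u'' * z * v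
          have hz2 : zhat = (u₁⁻¹ * (s i) * u'') * z * (v * v₁⁻¹) := by
            have e3 : u₁ * (zhat * v₁) = (s i) * u'' * z * v := by rw [← heq, hkey]
            have e4 : zhat = u₁⁻¹ * ((s i) * u'' * z * v) * v₁⁻¹ := by
              rw [← e3]; group
            rw [e4]; group
          have hmemu : u₁⁻¹ * (s i) * u'' ∈ Subgroup.closure (cs.simple '' Js) :=
            mul_mem (mul_mem (inv_mem hu₁) (Subgroup.subset_closure ⟨i, hiJ, rfl⟩)) hu''
          have hmemv : v * v₁⁻¹ ∈ Subgroup.closure (cs.simple '' Ks) :=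
            mul_mem hv (inv_mem hv₁)
          have := hmin _ hmemu _ hmemv
          rw [← hz2] at this
          omega
        · -- erase in v₁ part
          push_neg at hj2
          rw [List.eraseIdx_append_of_length_le hj2, cs.wordProd_append,
            cs.wordProd_append, hprod₁, ← hzword] at heq
          set vhat := π (ω₂.eraseIdx (j' - ωz.length)) with hvhat
          have hvhatmem : vhat ∈ Subgroup.closure (cs.simple '' Ks) :=
            wordProd_mem_closure cs Ks _
              (fun a ha => hK₂ a (List.eraseIdx_subset ha))
          have hj3 : j' - ωz.length < ω₂.length := by omega
          have hbound : ℓ vhat ≤ (ω₂.eraseIdx (j' - ωz.length)).length :=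
            cs.length_wordProd_le _
          have hel : (ω₂.eraseIdx (j' - ωz.length)).length + 1 = ω₂.length :=
            List.length_eraseIdx_add_one hj3
          have hl2 : ω₂.length = ℓ v₁ := by
            rw [CoxeterSystem.IsReduced] at hred₂
            rw [hprod₂] at hred₂
            omega
          refine ⟨u₁, hu₁, vhat, hvhatmem, ?_, ?_⟩
          · rw [hkey, heq]; group
          · have e2 : u₁ * z * vhat = (s i) * y := by rw [heq]; group
            have hb3 : ℓ (u₁ * z * vhat) ≤ ℓ u₁ + ℓ z + ℓ vhat := by
              have b1 := cs.length_mul_le (u₁ * z) vhat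
              have b2 := cs.length_mul_le u₁ z
              omega
            have e5 : ℓ (u₁ * z * vhat) = ℓ ((s i) * y) := by rw [e2]
            omega

end DoubleCoset

section MapLength

lemma map_wordProd (φ : W →* W) (g : B → B) (hg : ∀ i, φ (cs.simple i) = cs.simple (g i))
    (ω : List B) : φ (π ω) = π (ω.map g) := by
  induction ω with
  | nil => simp
  | cons i ω ih =>
    rw [cs.wordProd_cons, map_mul, ih, hg, List.map_cons, cs.wordProd_cons]

lemma length_map_le (φ : W →* W) (g : B → B) (hg : ∀ i, φ (cs.simple i) = cs.simple (g i))
    (w : W) : ℓ (φ w) ≤ ℓ w := by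
  obtain ⟨ω, hlen, rfl⟩ := cs.exists_reduced_word w
  rw [map_wordProd cs φ g hg]
  calc ℓ (π (ω.map g)) ≤ (ω.map g).length := cs.length_wordProd_le _
    _ = ω.length := List.length_map g
    _ = ℓ (π ω) := hlen.eq.symm

end MapLength

end MinDCAux

/-- Let `x` be a twisted involution and `z` an element of minimal length in the double coset
`W_J * x * W_{J⋆}`. Then `z⋆ = z⁻¹`, i.e. `z` is again a twisted involution. -/
theorem min_length_double_coset_twisted_involution
    {B : Type*} [Finite B] {W : Type*} [Group W] {M : CoxeterMatrix B}
    (cs : CoxeterSystem M W)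
    (f : W ≃* W)
    (hf_invol : ∀ w : W, f (f w) = w)
    (hf_simple : ∀ i : B, ∃ j : B, f (cs.simple i) = cs.simple j)
    (J : Set B)
    (hWJ_fin : ((Subgroup.closure (cs.simple '' J) : Subgroup W) : Set W).Finite)
    (x z : W) (hx : f x = x⁻¹)
    (hz_mem : ∃ a ∈ Subgroup.closure (cs.simple '' J),
      ∃ b ∈ Subgroup.closure (⇑f '' (cs.simple '' J)), z = a * x * b)
    (hz_min : ∀ a ∈ Subgroup.closure (cs.simple '' J),
      ∀ b ∈ Subgroup.closure (⇑f '' (cs.simple '' J)),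
        cs.length z ≤ cs.length (a * x * b)) :
    f z = z⁻¹ := by
  classical
  obtain ⟨a, ha, b, hb, hzz⟩ := hz_mem
  choose g hg using hf_simple
  -- the ⋆-image of the simple set
  have hKset : (⇑f '' (cs.simple '' J)) = cs.simple '' (g '' J) := by
    rw [Set.image_image, Set.image_image]
    exact Set.image_congr (fun i _ => hg i)
  have hcl : Subgroup.closure (⇑f '' (cs.simple '' J))
      = Subgroup.closure (cs.simple '' (g '' J)) := by rw [hKset]
  -- f preserves length
  have hfmono : ∀ w : W, cs.length (f w) ≤ cs.length w :=
    MinDCAux.length_map_le cs f.toMonoidHom g hg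
  have hflen : ∀ w : W, cs.length (f w) = cs.length w := by
    intro w
    refine le_antisymm (hfmono w) ?_
    have := hfmono (f w)
    rwa [hf_invol] at this
  -- images of a and b under f
  have hffX : ⇑f '' (⇑f '' (cs.simple '' J)) = cs.simple '' J := by
    rw [Set.image_image]
    have : (fun i => f (f i)) '' (cs.simple '' J) = id '' (cs.simple '' J) :=
      Set.image_congr (fun i _ => hf_invol i)
    rwa [Set.image_id] at this
  have hfa : f a ∈ Subgroup.closure (⇑f '' (cs.simple '' J)) := by
    have h1 : f a ∈ (Subgroup.closure (cs.simple '' J)).map f.toMonoidHom :=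
      ⟨a, ha, rfl⟩
    rwa [MonoidHom.map_closure, MulEquiv.coe_toMonoidHom] at h1
  have hfb : f b ∈ Subgroup.closure (cs.simple '' J) := by
    have h1 : f b ∈ (Subgroup.closure (⇑f '' (cs.simple '' J))).map f.toMonoidHom :=
      ⟨b, hb, rfl⟩
    rwa [MonoidHom.map_closure, MulEquiv.coe_toMonoidHom, hffX] at h1
  -- minimality of z in the double coset, in the standard form
  have hmin : ∀ u ∈ Subgroup.closure (cs.simple '' J),
      ∀ v ∈ Subgroup.closure (cs.simple '' (g '' J)),
      cs.length z ≤ cs.length (u * z * v) := by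
    intro u hu v hv
    have hv2 : v ∈ Subgroup.closure (⇑f '' (cs.simple '' J)) := by rw [hcl]; exact hv
    have h := hz_min (u * a) (mul_mem hu ha) (b * v) (mul_mem hb hv2)
    have e : u * a * x * (b * v) = u * z * v := by rw [hzz]; group
    rwa [e] at h
  -- the element (f z)⁻¹ lies in the same double coset
  have hfz : f z = f a * x⁻¹ * f b := by
    rw [hzz, map_mul, map_mul, hx]
  have hm : (f z)⁻¹ = ((f b)⁻¹ * a⁻¹) * z * (b⁻¹ * (f a)⁻¹) := by
    rw [hfz, hzz]; group
  have hu₀ : (f b)⁻¹ * a⁻¹ ∈ Subgroup.closure (cs.simple '' J) :=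
    mul_mem (inv_mem hfb) (inv_mem ha)
  have hv₀ : b⁻¹ * (f a)⁻¹ ∈ Subgroup.closure (cs.simple '' (g '' J)) := by
    rw [← hcl]
    exact mul_mem (inv_mem hb) (inv_mem hfa)
  obtain ⟨u', hu', v', hv', heqm, hlenm⟩ :=
    MinDCAux.exists_rep_lengths_add cs hmin _ hu₀ _ hv₀
  have hlm : cs.length (((f b)⁻¹ * a⁻¹) * z * (b⁻¹ * (f a)⁻¹)) = cs.length z := by
    rw [← hm, cs.length_inv, hflen]
  rw [heqm, hlenm] at hlm
  have hu'1 : cs.length u' = 0 := by omega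
  have hv'1 : cs.length v' = 0 := by omega
  rw [cs.length_eq_zero_iff] at hu'1 hv'1
  subst hu'1 hv'1
  rw [one_mul, mul_one] at heqm
  rw [heqm] at hm
  rw [inv_eq_iff_eq_inv] at hm
  exact hm
end

section
/- Assume J* = J and w* = w_J w w_J for all w ∈ W_J. Let t ∈ W satisfy t* = w_J t⁻¹ w_J, ℓ(w_J t) = ℓ(w_J) + ℓ(t), ℓ(t²) = 2ℓ(t), and ℓ(w_J t²) = ℓ(w_J) + ℓ(t²). Then (w_J t) • ((w_J t)*)⁻¹ = w_J t², where • is the Demazure product. -/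
section Aux

variable {B : Type*} {W : Type*} [Group W] {M : CoxeterMatrix B} (cs : CoxeterSystem M W)
  (d : W → W → W)
  (hd_assoc : ∀ u v w : W, d (d u v) w = d u (d v w))
  (hd_one_left : ∀ w : W, d 1 w = w)
  (hd_one_right : ∀ w : W, d w 1 = w)
  (hd_simple_lt : ∀ (i : B) (w : W), cs.length (cs.simple i * w) = cs.length w + 1 →
    d (cs.simple i) w = cs.simple i * w)
  (hd_simple_gt : ∀ (i : B) (w : W), cs.length (cs.simple i * w) + 1 = cs.length w →
    d (cs.simple i) w = w)

include hd_assoc hd_one_left hd_simple_lt in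
/-- right multiplication rule, increasing case -/
lemma aux_R1 : ∀ n (w : W) (i : B), cs.length w = n →
    cs.length (w * cs.simple i) = cs.length w + 1 → d w (cs.simple i) = w * cs.simple i := by
  intro n
  induction n using Nat.strong_induction_on with
  | _ n IH =>
    intro w i hn hlen
    rcases eq_or_ne w 1 with rfl | hw
    · rw [hd_one_left, one_mul]
    · obtain ⟨i', hi'⟩ := cs.exists_leftDescent_of_ne_one hw
      have hdesc : cs.length (cs.simple i' * w) < cs.length w := hi'
      have hlw' : cs.length (cs.simple i' * w) + 1 = cs.length w := by
        rcases cs.length_simple_mul w i' with h | h <;> omega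
      have hsu : cs.simple i' * (cs.simple i' * w) = w := cs.simple_mul_simple_cancel_left i'
      have he : cs.simple i' * ((cs.simple i' * w) * cs.simple i) = w * cs.simple i := by
        rw [← mul_assoc, hsu]
      have hub : cs.length (w * cs.simple i) ≤
          cs.length ((cs.simple i' * w) * cs.simple i) + 1 := by
        have h := cs.length_mul_le (cs.simple i') ((cs.simple i' * w) * cs.simple i)
        rw [cs.length_simple, he] at h
        omega
      have h2 : cs.length ((cs.simple i' * w) * cs.simple i) =
          cs.length (cs.simple i' * w) + 1 := by
        rcases cs.length_mul_simple (cs.simple i' * w) i with h | h <;> omega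
      have hIH : d (cs.simple i' * w) (cs.simple i) = (cs.simple i' * w) * cs.simple i :=
        IH (cs.length (cs.simple i' * w)) (by omega) _ i rfl h2
      have hxx : cs.length (cs.simple i' * (cs.simple i' * w)) =
          cs.length (cs.simple i' * w) + 1 := by rw [hsu]; omega
      have hsplit : d (cs.simple i') (cs.simple i' * w) = w := by
        rw [hd_simple_lt i' _ hxx, hsu]
      calc d w (cs.simple i)
          = d (d (cs.simple i') (cs.simple i' * w)) (cs.simple i) := by rw [hsplit]
        _ = d (cs.simple i') (d (cs.simple i' * w) (cs.simple i)) := hd_assoc _ _ _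
        _ = d (cs.simple i') ((cs.simple i' * w) * cs.simple i) := by rw [hIH]
        _ = cs.simple i' * ((cs.simple i' * w) * cs.simple i) := by
            apply hd_simple_lt
            rw [he]
            omega
        _ = w * cs.simple i := he

include hd_assoc hd_one_left hd_simple_lt hd_simple_gt in
/-- right multiplication rule, decreasing case -/
lemma aux_R2 : ∀ (w : W) (i : B),
    cs.length (w * cs.simple i) + 1 = cs.length w → d w (cs.simple i) = w := by
  intro w i hlen
  have hys : (w * cs.simple i) * cs.simple i = w := cs.simple_mul_simple_cancel_right i
  have hylen : cs.length ((w * cs.simple i) * cs.simple i) =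
      cs.length (w * cs.simple i) + 1 := by rw [hys]; omega
  have hdss : d (cs.simple i) (cs.simple i) = cs.simple i := by
    apply hd_simple_gt
    rw [cs.simple_mul_simple_self, cs.length_one, cs.length_simple]
  have hR1 : d (w * cs.simple i) (cs.simple i) = w := by
    rw [aux_R1 cs d hd_assoc hd_one_left hd_simple_lt _ _ i rfl hylen, hys]
  calc d w (cs.simple i) = d (d (w * cs.simple i) (cs.simple i)) (cs.simple i) := by rw [hR1]
    _ = d (w * cs.simple i) (d (cs.simple i) (cs.simple i)) := hd_assoc _ _ _
    _ = d (w * cs.simple i) (cs.simple i) := by rw [hdss]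
    _ = w := hR1

include hd_assoc hd_one_left hd_simple_lt in
/-- lengths add implies Demazure product is the product -/
lemma aux_L1 : ∀ n (u v : W), cs.length u = n →
    cs.length (u * v) = cs.length u + cs.length v → d u v = u * v := by
  intro n
  induction n using Nat.strong_induction_on with
  | _ n IH =>
    intro u v hn hlen
    rcases eq_or_ne u 1 with rfl | hu
    · rw [hd_one_left, one_mul]
    · obtain ⟨i, hi⟩ := cs.exists_leftDescent_of_ne_one hu
      have hdesc : cs.length (cs.simple i * u) < cs.length u := hi
      have hlu' : cs.length (cs.simple i * u) + 1 = cs.length u := by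
        rcases cs.length_simple_mul u i with h | h <;> omega
      have hsu : cs.simple i * (cs.simple i * u) = u := cs.simple_mul_simple_cancel_left i
      have he : cs.simple i * ((cs.simple i * u) * v) = u * v := by
        rw [← mul_assoc, hsu]
      have hu'v : cs.length ((cs.simple i * u) * v) =
          cs.length (cs.simple i * u) + cs.length v := by
        have hub := cs.length_mul_le (cs.simple i * u) v
        have hlb := cs.length_mul_le (cs.simple i) ((cs.simple i * u) * v)
        rw [cs.length_simple, he] at hlb
        omega
      have hIH : d (cs.simple i * u) v = (cs.simple i * u) * v :=
        IH (cs.length (cs.simple i * u)) (by omega) _ v rfl hu'v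
      have hxx : cs.length (cs.simple i * (cs.simple i * u)) =
          cs.length (cs.simple i * u) + 1 := by rw [hsu]; omega
      have hsplit : d (cs.simple i) (cs.simple i * u) = u := by
        rw [hd_simple_lt i _ hxx, hsu]
      calc d u v = d (d (cs.simple i) (cs.simple i * u)) v := by rw [hsplit]
        _ = d (cs.simple i) (d (cs.simple i * u) v) := hd_assoc _ _ _
        _ = d (cs.simple i) ((cs.simple i * u) * v) := by rw [hIH]
        _ = cs.simple i * ((cs.simple i * u) * v) := by
            apply hd_simple_lt
            rw [he]
            omega
        _ = u * v := he

include hd_assoc hd_one_left hd_one_right hd_simple_lt hd_simple_gt in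
/-- absorption: if every letter of a word is a right descent of x, then the
Demazure product of x with the word's product is x -/
lemma aux_absorb (J : Set B) (x : W)
    (hx : ∀ i ∈ J, cs.length (x * cs.simple i) + 1 = cs.length x) :
    ∀ ω : List B, (∀ i ∈ ω, i ∈ J) → d x (cs.wordProd ω) = x := by
  intro ω
  induction ω with
  | nil => intro _; rw [cs.wordProd_nil, hd_one_right]
  | cons i ω' IHω =>
    intro hω
    have hiJ : i ∈ J := hω i List.mem_cons_self
    have hxi : d x (cs.simple i) = x :=
      aux_R2 cs d hd_assoc hd_one_left hd_simple_lt hd_simple_gt x i (hx i hiJ)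
    have IH : d x (cs.wordProd ω') = x := IHω (fun j hj => hω j (List.mem_cons_of_mem i hj))
    rw [cs.wordProd_cons]
    rcases cs.length_simple_mul (cs.wordProd ω') i with h | h
    · calc d x (cs.simple i * cs.wordProd ω')
          = d x (d (cs.simple i) (cs.wordProd ω')) := by
            rw [hd_simple_lt i (cs.wordProd ω') h]
        _ = d (d x (cs.simple i)) (cs.wordProd ω') := (hd_assoc _ _ _).symm
        _ = d x (cs.wordProd ω') := by rw [hxi]
        _ = x := IH
    · -- s i * π ω' is shorter
      have hsv : cs.simple i * (cs.simple i * cs.wordProd ω') = cs.wordProd ω' :=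
        cs.simple_mul_simple_cancel_left i
      have hlt : cs.length (cs.simple i * (cs.simple i * cs.wordProd ω')) =
          cs.length (cs.simple i * cs.wordProd ω') + 1 := by rw [hsv]; omega
      have hstep : d x (cs.wordProd ω') = d x (cs.simple i * cs.wordProd ω') := by
        calc d x (cs.wordProd ω')
            = d x (d (cs.simple i) (cs.simple i * cs.wordProd ω')) := by
              rw [hd_simple_lt i _ hlt, hsv]
          _ = d (d x (cs.simple i)) (cs.simple i * cs.wordProd ω') := (hd_assoc _ _ _).symm
          _ = d x (cs.simple i * cs.wordProd ω') := by rw [hxi]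
      rw [← hstep]
      exact IH

/-- every element of the parabolic closure is the product of a word with letters in J -/
lemma aux_word (J : Set B) :
    ∀ v ∈ Subgroup.closure (cs.simple '' J),
      ∃ ω : List B, (∀ i ∈ ω, i ∈ J) ∧ cs.wordProd ω = v := by
  intro v hv
  induction hv using Subgroup.closure_induction with
  | mem x hx =>
    obtain ⟨i, hiJ, rfl⟩ := hx
    exact ⟨[i], by simpa using hiJ, cs.wordProd_singleton i⟩
  | one => exact ⟨[], by simp, cs.wordProd_nil⟩
  | mul x y hx hy ihx ihy =>
    obtain ⟨ω₁, h₁, rfl⟩ := ihx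
    obtain ⟨ω₂, h₂, rfl⟩ := ihy
    refine ⟨ω₁ ++ ω₂, ?_, cs.wordProd_append ω₁ ω₂⟩
    intro i hi
    rcases List.mem_append.mp hi with h | h
    · exact h₁ i h
    · exact h₂ i h
  | inv x hx ihx =>
    obtain ⟨ω, h, rfl⟩ := ihx
    exact ⟨ω.reverse, fun i hi => h i (List.mem_reverse.mp hi), cs.wordProd_reverse ω⟩

/-- a simple-preserving automorphism does not increase length -/
lemma aux_length_f_le (f : W ≃* W) (hf_simple : ∀ i : B, ∃ j : B, f (cs.simple i) = cs.simple j)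
    (w : W) : cs.length (f w) ≤ cs.length w := by
  obtain ⟨ω, hlen, rfl⟩ := cs.exists_reduced_word w
  have : ∀ ω' : List B, ∃ ω'' : List B, ω''.length = ω'.length ∧
      f (cs.wordProd ω') = cs.wordProd ω'' := by
    intro ω'
    induction ω' with
    | nil => exact ⟨[], rfl, by simp⟩
    | cons i ω' ih =>
      obtain ⟨ω'', hl, he⟩ := ih
      obtain ⟨j, hj⟩ := hf_simple i
      refine ⟨j :: ω'', by simp [hl], ?_⟩
      rw [cs.wordProd_cons, cs.wordProd_cons, map_mul, hj, he]
  obtain ⟨ω'', hl, he⟩ := this ω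
  rw [he]
  calc cs.length (cs.wordProd ω'') ≤ ω''.length := cs.length_wordProd_le ω''
    _ = ω.length := hl
    _ = cs.length (cs.wordProd ω) := Eq.symm hlen

end Aux

/-- Assume `J⋆ = J` and `w⋆ = w_J * w * w_J` for all `w ∈ W_J`. Let `t ∈ W` satisfy
`t⋆ = w_J * t⁻¹ * w_J`, `ℓ(w_J * t) = ℓ(w_J) + ℓ(t)`, `ℓ(t²) = 2ℓ(t)`, and
`ℓ(w_J * t²) = ℓ(w_J) + ℓ(t²)`. Then `(w_J * t) • ((w_J * t)⋆)⁻¹ = w_J * t²`,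
where `•` is the Demazure product. -/
theorem demazure_pi_of_dominant_translation
    {B : Type*} [Finite B] {W : Type*} [Group W] {M : CoxeterMatrix B}
    (cs : CoxeterSystem M W)
    (d : W → W → W)
    (hd_assoc : ∀ u v w : W, d (d u v) w = d u (d v w))
    (hd_one_left : ∀ w : W, d 1 w = w)
    (hd_one_right : ∀ w : W, d w 1 = w)
    (hd_simple_lt : ∀ (i : B) (w : W), cs.length (cs.simple i * w) = cs.length w + 1 →
      d (cs.simple i) w = cs.simple i * w)
    (hd_simple_gt : ∀ (i : B) (w : W), cs.length (cs.simple i * w) + 1 = cs.length w →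
      d (cs.simple i) w = w)
    (f : W ≃* W)
    (hf_invol : ∀ w : W, f (f w) = w)
    (hf_simple : ∀ i : B, ∃ j : B, f (cs.simple i) = cs.simple j)
    (J : Set B)
    (hWJ_fin : ((Subgroup.closure (cs.simple '' J) : Subgroup W) : Set W).Finite)
    (wJ : W) (hwJ_mem : wJ ∈ Subgroup.closure (cs.simple '' J))
    (hwJ_max : ∀ u ∈ Subgroup.closure (cs.simple '' J), cs.length u ≤ cs.length wJ)
    (hJ_star : ⇑f '' (cs.simple '' J) = cs.simple '' J)
    (hf_WJ : ∀ w ∈ Subgroup.closure (cs.simple '' J), f w = wJ * w * wJ)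
    (t : W) (ht_star : f t = wJ * t⁻¹ * wJ)
    (ht_len : cs.length (wJ * t) = cs.length wJ + cs.length t)
    (ht_sq : cs.length (t ^ 2) = 2 * cs.length t)
    (ht_sq_len : cs.length (wJ * t ^ 2) = cs.length wJ + cs.length (t ^ 2)) :
    d (wJ * t) (f (wJ * t))⁻¹ = wJ * t ^ 2 := by
  have hlen_f : ∀ w : W, cs.length (f w) = cs.length w := by
    intro w
    have h1 := aux_length_f_le cs f hf_simple w
    have h2 := aux_length_f_le cs f hf_simple (f w)
    rw [hf_invol] at h2
    omega
  -- wJ is an involution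
  have hwJ_sq : wJ * wJ = 1 := by
    have h1 : f wJ = wJ * wJ * wJ := hf_WJ wJ hwJ_mem
    have h2 : f (wJ * wJ) = wJ * (wJ * wJ) * wJ := hf_WJ _ (mul_mem hwJ_mem hwJ_mem)
    rw [map_mul, h1] at h2
    simp only [mul_assoc] at h2
    have c3 := mul_left_cancel (mul_left_cancel (mul_left_cancel h2))
    have c4 : wJ * (wJ * wJ) = wJ * 1 := by rw [mul_one]; exact c3
    exact mul_left_cancel c4
  have hwJ_sq' : ∀ z : W, wJ * (wJ * z) = z := fun z => by
    rw [← mul_assoc, hwJ_sq, one_mul]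
  have hwJ_inv : wJ⁻¹ = wJ := by
    rw [eq_comm, eq_inv_iff_mul_eq_one, hwJ_sq]
  have hfwJ : f wJ = wJ := by
    rw [hf_WJ wJ hwJ_mem, mul_assoc, hwJ_sq, mul_one]
  -- compute (f (wJ * t))⁻¹ = wJ * t
  have hfwt : (f (wJ * t))⁻¹ = wJ * t := by
    rw [map_mul, hfwJ, ht_star]
    apply inv_eq_of_mul_eq_one_left
    simp only [mul_assoc, hwJ_sq', mul_inv_cancel_left]
    exact hwJ_sq
  rw [hfwt]
  -- x := wJ * t decomposes as (f t)⁻¹ * wJ with lengths adding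
  have hx_decomp : (f t)⁻¹ * wJ = wJ * t := by
    rw [inv_mul_eq_iff_eq_mul, ht_star]
    simp only [mul_assoc, hwJ_sq', inv_mul_cancel, mul_one]
  have hft_len : cs.length ((f t)⁻¹ : W) = cs.length t := by
    rw [cs.length_inv, hlen_f]
  have hx_maximal : ∀ i ∈ J, cs.length ((wJ * t) * cs.simple i) + 1 = cs.length (wJ * t) := by
    intro i hiJ
    have hsi_mem : cs.simple i ∈ Subgroup.closure (cs.simple '' J) :=
      Subgroup.subset_closure ⟨i, hiJ, rfl⟩
    have hwJsi : cs.length (wJ * cs.simple i) + 1 = cs.length wJ := by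
      have hle : cs.length (wJ * cs.simple i) ≤ cs.length wJ :=
        hwJ_max _ (mul_mem hwJ_mem hsi_mem)
      rcases cs.length_mul_simple wJ i with h | h <;> omega
    have hub : cs.length ((wJ * t) * cs.simple i) ≤
        cs.length t + cs.length (wJ * cs.simple i) := by
      calc cs.length ((wJ * t) * cs.simple i)
          = cs.length ((f t)⁻¹ * (wJ * cs.simple i)) := by
            rw [← hx_decomp, mul_assoc]
        _ ≤ cs.length ((f t)⁻¹ : W) + cs.length (wJ * cs.simple i) := cs.length_mul_le _ _
        _ = cs.length t + cs.length (wJ * cs.simple i) := by rw [hft_len]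
    rcases cs.length_mul_simple (wJ * t) i with h | h <;> omega
  -- wJ is the product of a J-word
  obtain ⟨ω, hωJ, hωprod⟩ := aux_word cs J wJ hwJ_mem
  have habs : d (wJ * t) wJ = wJ * t := by
    have h := aux_absorb cs d hd_assoc hd_one_left hd_one_right hd_simple_lt hd_simple_gt J
      (wJ * t) hx_maximal ω hωJ
    rwa [hωprod] at h
  have hsplit : d wJ t = wJ * t :=
    aux_L1 cs d hd_assoc hd_one_left hd_simple_lt (cs.length wJ) wJ t rfl ht_len
  have hpow : wJ * t * t = wJ * t ^ 2 := by rw [pow_two, mul_assoc]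
  have hfinal : d (wJ * t) t = wJ * t * t := by
    apply aux_L1 cs d hd_assoc hd_one_left hd_simple_lt (cs.length (wJ * t)) (wJ * t) t rfl
    rw [hpow, ht_sq_len, ht_sq, ht_len]
    omega
  calc d (wJ * t) (wJ * t) = d (wJ * t) (d wJ t) := by rw [hsplit]
    _ = d (d (wJ * t) wJ) t := (hd_assoc _ _ _).symm
    _ = d (wJ * t) t := by rw [habs]
    _ = wJ * t * t := hfinal
    _ = wJ * t ^ 2 := hpow
end

section
/- Let W be the Coxeter group of affine type A₁, i.e. the Coxeter group on two generators s₁, s₂ with s₁² = s₂² = 1 and no other relations (infinite dihedral group), let ℓ be its length function, let • be the Demazure product, and take * to be the identity automorphism. Set A = s₂s₁. Then for every m ∈ ℕ: (s₁Aᵐ) • (s₁Aᵐ)⁻¹ = s₁A^{2m} and (s₁Aᵐs₂) • (s₁Aᵐs₂)⁻¹ = s₁A^{2m+1}. -/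
namespace DemazureA1Aux

open CoxeterSystem DihedralGroup

variable {W : Type*} [Group W] {M : CoxeterMatrix (Fin 2)}

/-- Alternating element of length `n` ending (on the right) with `s 0`. -/
def altA (cs : CoxeterSystem M W) : ℕ → W
  | 0 => 1
  | n+1 => cs.simple (if Even n then 0 else 1) * altA cs n

/-- Alternating element of length `n` ending (on the right) with `s 1`. -/
def altB (cs : CoxeterSystem M W) : ℕ → W
  | 0 => 1
  | n+1 => cs.simple (if Even n then 1 else 0) * altB cs n

variable (cs : CoxeterSystem M W)

@[simp] lemma altA_zero : altA cs 0 = 1 := rfl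
@[simp] lemma altB_zero : altB cs 0 = 1 := rfl
lemma altA_succ (n : ℕ) :
    altA cs (n+1) = cs.simple (if Even n then 0 else 1) * altA cs n := rfl
lemma altB_succ (n : ℕ) :
    altB cs (n+1) = cs.simple (if Even n then 1 else 0) * altB cs n := rfl

lemma altA_two_mul (m : ℕ) : altA cs (2*m) = (cs.simple 1 * cs.simple 0) ^ m := by
  induction m with
  | zero => simp
  | succ m ih =>
    have h2 : 2*(m+1) = (2*m+1)+1 := by ring
    rw [h2, altA_succ, altA_succ, ih]
    have : ¬ Even (2*m+1) := by simp [Nat.even_add_one]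
    simp [this, pow_succ', mul_assoc]

lemma altA_odd (m : ℕ) : altA cs (2*m+1) = cs.simple 0 * (cs.simple 1 * cs.simple 0) ^ m := by
  rw [altA_succ, altA_two_mul]
  simp

lemma altB_two_mul (m : ℕ) : altB cs (2*m) = (cs.simple 0 * cs.simple 1) ^ m := by
  induction m with
  | zero => simp
  | succ m ih =>
    have h2 : 2*(m+1) = (2*m+1)+1 := by ring
    rw [h2, altB_succ, altB_succ, ih]
    have : ¬ Even (2*m+1) := by simp [Nat.even_add_one]
    simp [this, pow_succ', mul_assoc]

lemma altB_odd (m : ℕ) : altB cs (2*m+1) = cs.simple 1 * (cs.simple 0 * cs.simple 1) ^ m := by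
  rw [altB_succ, altB_two_mul]
  simp


noncomputable def phi (cs : CoxeterSystem M W)
    (hM : ∀ i j : Fin 2, i ≠ j → M i j = 0) : W →* DihedralGroup 0 :=
  cs.lift ⟨fun i => DihedralGroup.sr (i.val : ZMod 0), by
    intro i j
    rcases eq_or_ne i j with rfl | h
    · rw [M.diagonal, pow_one, sr_mul_self]
    · rw [hM i j h, pow_zero]⟩


@[simp] lemma phi_simple (hM : ∀ i j : Fin 2, i ≠ j → M i j = 0) (i : Fin 2) :
    phi cs hM (cs.simple i) = DihedralGroup.sr (i.val : ZMod 0) :=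
  cs.lift_apply_simple _ i

lemma phi_altA_even (hM : ∀ i j : Fin 2, i ≠ j → M i j = 0) (m : ℕ) :
    phi cs hM (altA cs (2*m)) = DihedralGroup.r (-(m : ZMod 0)) ∧
    phi cs hM (altA cs (2*m+1)) = DihedralGroup.sr (-(m : ZMod 0)) := by
  induction m with
  | zero =>
    constructor
    · simp [one_def, -DihedralGroup.r_zero]
    · rw [altA_succ]
      simp [sr_mul_r]
  | succ m ih =>
    have h2 : 2*(m+1) = (2*m+1)+1 := by ring
    have heven : ¬ Even (2*m+1) := by simp [Nat.even_add_one]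
    have h1 : phi cs hM (altA cs (2*(m+1))) = DihedralGroup.r (-((m:ZMod 0)+1)) := by
      rw [h2, altA_succ, map_mul, ih.2]
      simp only [heven, if_false, phi_simple, sr_mul_sr]
      norm_num
      ring_nf
    constructor
    · rw [h1]; push_cast; ring_nf
    · have h3 : 2*(m+1)+1 = (2*(m+1))+1 := rfl
      rw [h3, altA_succ, map_mul, h1]
      have : Even (2*(m+1)) := by simp
      simp only [this, if_true, phi_simple, sr_mul_r, Fin.val_zero, Nat.cast_zero]
      ring_nf
      congr 1
      push_cast
      ring

lemma phi_altB_even (hM : ∀ i j : Fin 2, i ≠ j → M i j = 0) (m : ℕ) :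
    phi cs hM (altB cs (2*m)) = DihedralGroup.r (m : ZMod 0) ∧
    phi cs hM (altB cs (2*m+1)) = DihedralGroup.sr ((m : ZMod 0)+1) := by
  induction m with
  | zero =>
    constructor
    · simp [one_def, -DihedralGroup.r_zero]
    · rw [altB_succ]
      simp [sr_mul_r]
  | succ m ih =>
    have h2 : 2*(m+1) = (2*m+1)+1 := by ring
    have heven : ¬ Even (2*m+1) := by simp [Nat.even_add_one]
    have h1 : phi cs hM (altB cs (2*(m+1))) = DihedralGroup.r ((m:ZMod 0)+1) := by
      rw [h2, altB_succ, map_mul, ih.2]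
      simp only [heven, if_false, phi_simple, sr_mul_sr]
      norm_num
    constructor
    · rw [h1]; push_cast; ring_nf
    · have h3 : 2*(m+1)+1 = (2*(m+1))+1 := rfl
      rw [h3, altB_succ, map_mul, h1]
      have : Even (2*(m+1)) := by simp
      simp only [this, if_true, phi_simple, sr_mul_r]
      congr 1
      simp only [Fin.val_one, Nat.cast_one]
      push_cast
      ring


lemma altA_inj (hM : ∀ i j : Fin 2, i ≠ j → M i j = 0) {n n' : ℕ} (h : altA cs n = altA cs n') : n = n' := by
  have hphi := congrArg (phi cs hM) h
  obtain ⟨k, hk | hk⟩ := Nat.even_or_odd' n <;>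
    obtain ⟨k', hk' | hk'⟩ := Nat.even_or_odd' n' <;> subst hk <;> subst hk'
  · rw [(phi_altA_even cs hM k).1, (phi_altA_even cs hM k').1] at hphi
    simp at hphi; omega
  · rw [(phi_altA_even cs hM k).1, (phi_altA_even cs hM k').2] at hphi
    simp at hphi
  · rw [(phi_altA_even cs hM k).2, (phi_altA_even cs hM k').1] at hphi
    simp at hphi
  · rw [(phi_altA_even cs hM k).2, (phi_altA_even cs hM k').2] at hphi
    simp at hphi; omega

lemma altB_inj (hM : ∀ i j : Fin 2, i ≠ j → M i j = 0) {n n' : ℕ} (h : altB cs n = altB cs n') : n = n' := by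
  have hphi := congrArg (phi cs hM) h
  obtain ⟨k, hk | hk⟩ := Nat.even_or_odd' n <;>
    obtain ⟨k', hk' | hk'⟩ := Nat.even_or_odd' n' <;> subst hk <;> subst hk'
  · rw [(phi_altB_even cs hM k).1, (phi_altB_even cs hM k').1] at hphi
    simp at hphi; omega
  · rw [(phi_altB_even cs hM k).1, (phi_altB_even cs hM k').2] at hphi
    simp at hphi
  · rw [(phi_altB_even cs hM k).2, (phi_altB_even cs hM k').1] at hphi
    simp at hphi
  · rw [(phi_altB_even cs hM k).2, (phi_altB_even cs hM k').2] at hphi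
    simp at hphi; omega

lemma altA_eq_altB (hM : ∀ i j : Fin 2, i ≠ j → M i j = 0) {n n' : ℕ} (h : altA cs n = altB cs n') : n = 0 ∧ n' = 0 := by
  have hphi := congrArg (phi cs hM) h
  obtain ⟨k, hk | hk⟩ := Nat.even_or_odd' n <;>
    obtain ⟨k', hk' | hk'⟩ := Nat.even_or_odd' n' <;> subst hk <;> subst hk'
  · rw [(phi_altA_even cs hM k).1, (phi_altB_even cs hM k').1] at hphi
    simp only [DihedralGroup.r.injEq] at hphi
    have h2 : ((k + k' : ℕ) : ZMod 0) = 0 := by push_cast; linear_combination -hphi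
    have := Nat.cast_eq_zero.mp h2
    omega
  · rw [(phi_altA_even cs hM k).1, (phi_altB_even cs hM k').2] at hphi
    simp at hphi
  · rw [(phi_altA_even cs hM k).2, (phi_altB_even cs hM k').1] at hphi
    simp at hphi
  · rw [(phi_altA_even cs hM k).2, (phi_altB_even cs hM k').2] at hphi
    simp only [DihedralGroup.sr.injEq] at hphi
    have h2 : ((k + k' + 1 : ℕ) : ZMod 0) = 0 := by push_cast; linear_combination -hphi
    have := Nat.cast_eq_zero.mp h2
    omega


lemma altA_succ_even {n : ℕ} (h : Even n) :
    altA cs (n+1) = cs.simple 0 * altA cs n := by rw [altA_succ, if_pos h]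
lemma altA_succ_odd {n : ℕ} (h : ¬ Even n) :
    altA cs (n+1) = cs.simple 1 * altA cs n := by rw [altA_succ, if_neg h]
lemma altB_succ_even {n : ℕ} (h : Even n) :
    altB cs (n+1) = cs.simple 1 * altB cs n := by rw [altB_succ, if_pos h]
lemma altB_succ_odd {n : ℕ} (h : ¬ Even n) :
    altB cs (n+1) = cs.simple 0 * altB cs n := by rw [altB_succ, if_neg h]

lemma wordProd_alt (ω : List (Fin 2)) :
    ∃ n ≤ ω.length, cs.wordProd ω = altA cs n ∨ cs.wordProd ω = altB cs n := by
  induction ω with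
  | nil => exact ⟨0, le_rfl, Or.inl (by simp)⟩
  | cons i ω ih =>
    have hi : i = 0 ∨ i = 1 := by fin_cases i; exacts [Or.inl rfl, Or.inr rfl]
    obtain ⟨n, hn, hA | hB⟩ := ih <;> rw [cs.wordProd_cons] <;> rcases hi with rfl | rfl
    · -- s 0 * altA n
      rcases Nat.even_or_odd n with he | ho
      · exact ⟨n+1, by simp; omega,
          Or.inl (by rw [hA, ← altA_succ_even cs he])⟩
      · obtain ⟨k, rfl⟩ := ho
        refine ⟨2*k, by simp; omega, Or.inl ?_⟩
        rw [hA, altA_succ_even cs (even_two_mul k), cs.simple_mul_simple_cancel_left]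
    · -- s 1 * altA n
      rcases Nat.even_or_odd n with he | ho
      · rcases n with _ | m
        · exact ⟨1, by simp, Or.inr (by rw [hA, altB_succ_even cs Even.zero]; simp)⟩
        · have hm : ¬ Even m := by
            rcases Nat.even_add_one.mp he with h; simpa using h
          refine ⟨m, by simp; omega, Or.inl ?_⟩
          rw [hA, altA_succ_odd cs hm, cs.simple_mul_simple_cancel_left]
      · exact ⟨n+1, by simp; omega,
          Or.inl (by rw [hA, ← altA_succ_odd cs (Nat.not_even_iff_odd.mpr ho)])⟩
    · -- s 0 * altB n
      rcases Nat.even_or_odd n with he | ho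
      · rcases n with _ | m
        · exact ⟨1, by simp, Or.inl (by rw [hB, altA_succ_even cs Even.zero]; simp)⟩
        · have hm : ¬ Even m := by
            rcases Nat.even_add_one.mp he with h; simpa using h
          refine ⟨m, by simp; omega, Or.inr ?_⟩
          rw [hB, altB_succ_odd cs hm, cs.simple_mul_simple_cancel_left]
      · exact ⟨n+1, by simp; omega,
          Or.inr (by rw [hB, ← altB_succ_odd cs (Nat.not_even_iff_odd.mpr ho)])⟩
    · -- s 1 * altB n
      rcases Nat.even_or_odd n with he | ho
      · exact ⟨n+1, by simp; omega,
          Or.inr (by rw [hB, ← altB_succ_even cs he])⟩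
      · obtain ⟨k, rfl⟩ := ho
        refine ⟨2*k, by simp; omega, Or.inr ?_⟩
        rw [hB, altB_succ_even cs (even_two_mul k), cs.simple_mul_simple_cancel_left]

lemma length_altA_le (n : ℕ) : cs.length (altA cs n) ≤ n := by
  induction n with
  | zero => simp
  | succ n ih =>
    rw [altA_succ]
    calc cs.length (_ * altA cs n) ≤ cs.length _ + cs.length (altA cs n) := cs.length_mul_le _ _
    _ ≤ n + 1 := by rw [cs.length_simple]; omega

lemma length_altB_le (n : ℕ) : cs.length (altB cs n) ≤ n := by
  induction n with
  | zero => simp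
  | succ n ih =>
    rw [altB_succ]
    calc cs.length (_ * altB cs n) ≤ cs.length _ + cs.length (altB cs n) := cs.length_mul_le _ _
    _ ≤ n + 1 := by rw [cs.length_simple]; omega

lemma length_altA (hM : ∀ i j : Fin 2, i ≠ j → M i j = 0) (n : ℕ) :
    cs.length (altA cs n) = n := by
  refine le_antisymm (length_altA_le cs n) ?_
  obtain ⟨ω, hlen, hw⟩ := cs.exists_reduced_word (altA cs n)
  obtain ⟨n', hn', hA | hB⟩ := wordProd_alt cs ω
  · have := altA_inj cs hM (hw.trans hA)
    have := hlen.eq; rw [← hw] at this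
    omega
  · have := (altA_eq_altB cs hM (hw.trans hB)).1
    have := hlen.eq; rw [← hw] at this
    omega

lemma length_altB (hM : ∀ i j : Fin 2, i ≠ j → M i j = 0) (n : ℕ) :
    cs.length (altB cs n) = n := by
  refine le_antisymm (length_altB_le cs n) ?_
  obtain ⟨ω, hlen, hw⟩ := cs.exists_reduced_word (altB cs n)
  obtain ⟨n', hn', hA | hB⟩ := wordProd_alt cs ω
  · have := (altA_eq_altB cs hM (hA.symm.trans hw.symm)).2
    have := hlen.eq; rw [← hw] at this
    omega
  · have := altB_inj cs hM (hw.trans hB)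
    have := hlen.eq; rw [← hw] at this
    omega


section Dem


def HDa (d : W → W → W) : Prop := ∀ u v w : W, d (d u v) w = d u (d v w)
def HDlt (cs : CoxeterSystem M W) (d : W → W → W) : Prop :=
  ∀ i (w : W), cs.length (cs.simple i * w) = cs.length w + 1 →
      d (cs.simple i) w = cs.simple i * w
def HDgt (cs : CoxeterSystem M W) (d : W → W → W) : Prop :=
  ∀ i (w : W), cs.length (cs.simple i * w) + 1 = cs.length w →
      d (cs.simple i) w = w


lemma d_prependA (hM : ∀ i j : Fin 2, i ≠ j → M i j = 0) (d : W → W → W) (hd_simple_lt : HDlt cs d) (n : ℕ) :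
    d (cs.simple (if Even n then 0 else 1)) (altA cs n) = altA cs (n+1) := by
  have key : cs.simple (if Even n then 0 else 1) * altA cs n = altA cs (n+1) :=
    (altA_succ cs n).symm
  have hl : cs.length (cs.simple (if Even n then 0 else 1) * altA cs n)
      = cs.length (altA cs n) + 1 := by
    rw [key, length_altA cs hM, length_altA cs hM]
  rw [hd_simple_lt _ _ hl, key]

lemma d_prependB (hM : ∀ i j : Fin 2, i ≠ j → M i j = 0) (d : W → W → W) (hd_simple_lt : HDlt cs d) (n : ℕ) :
    d (cs.simple (if Even n then 1 else 0)) (altB cs n) = altB cs (n+1) := by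
  have key : cs.simple (if Even n then 1 else 0) * altB cs n = altB cs (n+1) :=
    (altB_succ cs n).symm
  have hl : cs.length (cs.simple (if Even n then 1 else 0) * altB cs n)
      = cs.length (altB cs n) + 1 := by
    rw [key, length_altB cs hM, length_altB cs hM]
  rw [hd_simple_lt _ _ hl, key]

lemma claimA (hM : ∀ i j : Fin 2, i ≠ j → M i j = 0) (d : W → W → W) (hd_assoc : HDa d) (hd_simple_lt : HDlt cs d) (hd_simple_gt : HDgt cs d) (j : ℕ) :
    ∀ u, d (altA cs (u+1)) (altA cs (2*j+1)) = altA cs (2*j+1+u) := by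
  intro u
  induction u with
  | zero =>
    have h1 : altA cs 1 = cs.simple 0 := by rw [altA_succ_even cs Even.zero]; simp
    rw [h1]
    have hkey : cs.simple 0 * altA cs (2*j+1) = altA cs (2*j) := by
      rw [altA_succ_even cs (even_two_mul j), cs.simple_mul_simple_cancel_left]
    have hl : cs.length (cs.simple 0 * altA cs (2*j+1)) + 1 = cs.length (altA cs (2*j+1)) := by
      rw [hkey, length_altA cs hM, length_altA cs hM]
    rw [hd_simple_gt _ _ hl]
  | succ u ih =>
    rw [← d_prependA cs hM d hd_simple_lt (u+1), hd_assoc, ih]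
    have hecond : (if Even (u+1) then (0:Fin 2) else 1)
        = (if Even (2*j+1+u) then 0 else 1) := by
      have hiff : Even (2*j+1+u) ↔ Even (u+1) := by
        simp only [Nat.even_iff]; omega
      by_cases h : Even (u+1)
      · rw [if_pos h, if_pos (hiff.mpr h)]
      · rw [if_neg h, if_neg (fun hc => h (hiff.mp hc))]
    have hkey : cs.simple (if Even (u+1) then (0:Fin 2) else 1) * altA cs (2*j+1+u)
        = altA cs (2*j+1+u+1) := by
      rw [hecond, ← altA_succ]
    rw [hd_simple_lt _ _ (by rw [hkey, length_altA cs hM, length_altA cs hM]), hkey,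
      show 2*j+1+u+1 = 2*j+1+(u+1) from rfl]

lemma claimB (hM : ∀ i j : Fin 2, i ≠ j → M i j = 0) (d : W → W → W) (hd_assoc : HDa d) (hd_simple_lt : HDlt cs d) (hd_simple_gt : HDgt cs d) (j : ℕ) :
    ∀ u, d (altB cs (u+1)) (altA cs (2*j+2)) = altA cs (2*j+2+u) := by
  intro u
  induction u with
  | zero =>
    have h1 : altB cs 1 = cs.simple 1 := by rw [altB_succ_even cs Even.zero]; simp
    rw [h1]
    have hodd : ¬ Even (2*j+1) := by simp only [Nat.even_iff]; omega
    have hkey : cs.simple 1 * altA cs (2*j+2) = altA cs (2*j+1) := by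
      rw [show 2*j+2 = (2*j+1)+1 from rfl, altA_succ_odd cs hodd,
        cs.simple_mul_simple_cancel_left]
    have hl : cs.length (cs.simple 1 * altA cs (2*j+2)) + 1 = cs.length (altA cs (2*j+2)) := by
      rw [hkey, length_altA cs hM, length_altA cs hM]
    rw [hd_simple_gt _ _ hl]
  | succ u ih =>
    rw [← d_prependB cs hM d hd_simple_lt (u+1), hd_assoc, ih]
    have hecond : (if Even (u+1) then (1:Fin 2) else 0)
        = (if Even (2*j+2+u) then 0 else 1) := by
      have hiff : Even (2*j+2+u) ↔ ¬ Even (u+1) := by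
        simp only [Nat.even_iff]; omega
      by_cases h : Even (u+1)
      · rw [if_pos h, if_neg (fun hc => (hiff.mp hc) h)]
      · rw [if_neg h, if_pos (hiff.mpr h)]
    have hkey : cs.simple (if Even (u+1) then (1:Fin 2) else 0) * altA cs (2*j+2+u)
        = altA cs (2*j+2+u+1) := by
      rw [hecond, ← altA_succ]
    rw [hd_simple_lt _ _ (by rw [hkey, length_altA cs hM, length_altA cs hM]), hkey,
      show 2*j+2+u+1 = 2*j+2+(u+1) from rfl]

end Dem

end DemazureA1Aux


open DemazureA1Aux in
/-- Let `W` be the Coxeter group of affine type `A₁`: the Coxeter group on two generators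
`s₁ = cs.simple 0`, `s₂ = cs.simple 1` with `s₁² = s₂² = 1` and no other relations
(Coxeter matrix with off-diagonal entries `0`, representing `∞`). Let `•` be the Demazure
product and take `*` to be the identity automorphism, so `(w*)⁻¹ = w⁻¹`. Set `A = s₂ * s₁`.
Then for every `m : ℕ`: `(s₁Aᵐ) • (s₁Aᵐ)⁻¹ = s₁A^(2m)` and
`(s₁Aᵐs₂) • (s₁Aᵐs₂)⁻¹ = s₁A^(2m+1)`. -/
theorem demazure_pi_affine_A1
    {W : Type*} [Group W] {M : CoxeterMatrix (Fin 2)}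
    (hM : ∀ i j : Fin 2, i ≠ j → M i j = 0)
    (cs : CoxeterSystem M W)
    (d : W → W → W)
    (hd_assoc : ∀ u v w : W, d (d u v) w = d u (d v w))
    (hd_one_left : ∀ w : W, d 1 w = w)
    (hd_one_right : ∀ w : W, d w 1 = w)
    (hd_simple_lt : ∀ i (w : W), cs.length (cs.simple i * w) = cs.length w + 1 →
      d (cs.simple i) w = cs.simple i * w)
    (hd_simple_gt : ∀ i (w : W), cs.length (cs.simple i * w) + 1 = cs.length w →
      d (cs.simple i) w = w) :
    ∀ m : ℕ,
      d (cs.simple 0 * (cs.simple 1 * cs.simple 0) ^ m)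
          (cs.simple 0 * (cs.simple 1 * cs.simple 0) ^ m)⁻¹
        = cs.simple 0 * (cs.simple 1 * cs.simple 0) ^ (2 * m) ∧
      d (cs.simple 0 * (cs.simple 1 * cs.simple 0) ^ m * cs.simple 1)
          (cs.simple 0 * (cs.simple 1 * cs.simple 0) ^ m * cs.simple 1)⁻¹
        = cs.simple 0 * (cs.simple 1 * cs.simple 0) ^ (2 * m + 1) := by
  intro m
  have hsc0 : SemiconjBy (cs.simple 0) (cs.simple 1 * cs.simple 0) (cs.simple 0 * cs.simple 1) :=
    (mul_assoc _ _ _).symm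
  have hsc1 : SemiconjBy (cs.simple 1) (cs.simple 0 * cs.simple 1) (cs.simple 1 * cs.simple 0) :=
    (mul_assoc _ _ _).symm
  have hinvpow : ((cs.simple 1 * cs.simple 0)^m)⁻¹ = (cs.simple 0 * cs.simple 1)^m := by
    rw [← inv_pow, mul_inv_rev, cs.inv_simple, cs.inv_simple]
  have e1 : cs.simple 0 * (cs.simple 1 * cs.simple 0)^m = altA cs (2*m+1) := (altA_odd cs m).symm
  have einv1 : (cs.simple 0 * (cs.simple 1 * cs.simple 0)^m)⁻¹ = altA cs (2*m+1) := by
    rw [mul_inv_rev, hinvpow, cs.inv_simple, ← (hsc0.pow_right m).eq]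
    exact (altA_odd cs m).symm
  have e2 : cs.simple 0 * (cs.simple 1 * cs.simple 0)^m * cs.simple 1 = altB cs (2*m+1+1) := by
    rw [show 2*m+1+1 = 2*(m+1) by ring, altB_two_mul, pow_succ, ← mul_assoc,
      ← (hsc0.pow_right m).eq]
  have einv2 : (cs.simple 0 * (cs.simple 1 * cs.simple 0)^m * cs.simple 1)⁻¹
      = altA cs (2*m+2) := by
    rw [mul_inv_rev, mul_inv_rev, hinvpow, cs.inv_simple, cs.inv_simple, ← mul_assoc,
      (hsc1.pow_right m).eq, mul_assoc, show 2*m+2 = 2*(m+1) by ring, altA_two_mul, pow_succ]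
  constructor
  · rw [einv1, e1,
      claimA cs hM d hd_assoc hd_simple_lt hd_simple_gt m (2*m),
      show 2*m+1+2*m = 2*(2*m)+1 by ring, altA_odd]
  · rw [einv2, e2,
      claimB cs hM d hd_assoc hd_simple_lt hd_simple_gt m (2*m+1),
      show 2*m+2+(2*m+1) = 2*(2*m+1)+1 by ring, altA_odd]
end

section
/- Let W be the Coxeter group of affine type A₂, i.e. the Coxeter group on generators s₁, s₂, s₃ with sᵢ² = 1 and (sᵢsⱼ)³ = 1 for all i ≠ j, let • be its Demazure product, and let * be the unique automorphism of W with s₁* = s₂, s₂* = s₁, s₃* = s₃. Then the map π(w) = w • (w*)⁻¹ is not injective: the elements u = s₁s₂s₁s₃s₂s₁ and v = s₁s₂s₁s₃s₁s₂ are distinct, yet π(u) = π(v). -/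
namespace DemazureA2Aux

def sfun (k t : ℤ) : ℤ :=
  if (t - k) % 3 = 0 then t + 1 else if (t - k) % 3 = 1 then t - 1 else t

lemma sfun_spec (k t : ℤ) :
    ((t - k) % 3 = 0 ∧ sfun k t = t + 1) ∨ ((t - k) % 3 = 1 ∧ sfun k t = t - 1) ∨
      ((t - k) % 3 = 2 ∧ sfun k t = t) := by
  unfold sfun; split_ifs <;> omega

lemma sfun_sfun (k t : ℤ) : sfun k (sfun k t) = t := by
  have h1 := sfun_spec k t
  have h2 := sfun_spec k (sfun k t)
  omega

lemma sfun_braid (k l t : ℤ) : sfun k (sfun l (sfun k t)) = sfun l (sfun k (sfun l t)) := by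
  have a1 := sfun_spec k t
  have a2 := sfun_spec l (sfun k t)
  have a3 := sfun_spec k (sfun l (sfun k t))
  have b1 := sfun_spec l t
  have b2 := sfun_spec k (sfun l t)
  have b3 := sfun_spec l (sfun k (sfun l t))
  omega

def aperm (k : ℤ) : Equiv.Perm ℤ :=
  ⟨sfun k, sfun k, sfun_sfun k, sfun_sfun k⟩

def Aff : Subgroup (Equiv.Perm ℤ) where
  carrier := {f | ∀ t, f (t + 3) = f t + 3}
  one_mem' := fun t => rfl
  mul_mem' := by
    intro f g hf hg t
    simp only [Equiv.Perm.mul_apply]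
    rw [hg, hf]
  inv_mem' := by
    intro f hf t
    apply f.injective
    rw [show ∀ x, f (f⁻¹ x) = x from fun x => f.apply_symm_apply x, hf,
      show ∀ x, f (f⁻¹ x) = x from fun x => f.apply_symm_apply x]

lemma aperm_mem (k : ℤ) : aperm k ∈ Aff := by
  intro t
  show sfun k (t + 3) = sfun k t + 3
  have h1 := sfun_spec k t
  have h2 := sfun_spec k (t + 3)
  omega

def g (i : Fin 3) : Aff := ⟨aperm i, aperm_mem i⟩

lemma g_sq (i : Fin 3) : g i * g i = 1 :=
  Subtype.ext (Equiv.ext fun t => sfun_sfun i t)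

lemma g_cancel (i : Fin 3) (x : Aff) : g i * (g i * x) = x := by
  rw [← mul_assoc, g_sq, one_mul]

lemma g_braid (i j : Fin 3) : g i * g j * g i = g j * g i * g j :=
  Subtype.ext (Equiv.ext fun t => sfun_braid i j t)

lemma g_braid' (i j : Fin 3) (x : Aff) :
    g i * (g j * (g i * x)) = g j * (g i * (g j * x)) := by
  rw [← mul_assoc, ← mul_assoc, ← mul_assoc, ← mul_assoc, g_braid]

lemma g_pow3 (i j : Fin 3) : (g i * g j) ^ 3 = 1 := by
  calc (g i * g j) ^ 3 = g i * (g j * (g i * (g j * (g i * g j)))) := by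
        simp [pow_succ, mul_assoc]
    _ = g j * (g i * (g j * (g j * (g i * g j)))) := g_braid' i j _
    _ = g j * (g i * (g i * g j)) := by rw [g_cancel]
    _ = g j * g j := by rw [g_cancel]
    _ = 1 := g_sq j

lemma isLiftable {M : CoxeterMatrix (Fin 3)} (hM : ∀ i j : Fin 3, i ≠ j → M i j = 3) :
    M.IsLiftable g := by
  intro i j
  by_cases h : i = j
  · subst h; rw [M.diagonal, pow_one, g_sq]
  · rw [hM i j h]; exact g_pow3 i j

/-- inversion-count statistic on affine permutations -/
def N (f : Aff) : ℕ :=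
  (((f : Equiv.Perm ℤ) 2 - (f : Equiv.Perm ℤ) 1) / 3).natAbs +
    (((f : Equiv.Perm ℤ) 3 - (f : Equiv.Perm ℤ) 1) / 3).natAbs +
    (((f : Equiv.Perm ℤ) 3 - (f : Equiv.Perm ℤ) 2) / 3).natAbs

lemma aff_shift_nat (f : Aff) (n : ℕ) (t : ℤ) :
    (f : Equiv.Perm ℤ) (t + 3 * n) = (f : Equiv.Perm ℤ) t + 3 * n := by
  induction n with
  | zero => simp
  | succ n ih =>
    have h2 := f.2 (t + 3 * n)
    rw [show t + 3*((n:ℕ)+1 : ℕ) = t + 3*(n:ℤ) + 3 by push_cast; ring, h2, ih]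
    push_cast; ring

lemma aff_mod_ne (f : Aff) {t u : ℤ} (h : t % 3 ≠ u % 3) :
    (f : Equiv.Perm ℤ) t % 3 ≠ (f : Equiv.Perm ℤ) u % 3 := by
  intro hc
  apply h
  rcases le_total ((f : Equiv.Perm ℤ) t) ((f : Equiv.Perm ℤ) u) with hle | hle
  · obtain ⟨n, hn⟩ : ∃ n : ℕ, (f : Equiv.Perm ℤ) u - (f : Equiv.Perm ℤ) t = 3 * n := by
      obtain ⟨m, hm⟩ : (3:ℤ) ∣ ((f : Equiv.Perm ℤ) u - (f : Equiv.Perm ℤ) t) := by omega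
      exact ⟨m.toNat, by omega⟩
    have h2 : (f : Equiv.Perm ℤ) (t + 3 * n) = (f : Equiv.Perm ℤ) u := by
      rw [aff_shift_nat]; omega
    have h3 : t + 3 * n = u := (f : Equiv.Perm ℤ).injective h2
    omega
  · obtain ⟨n, hn⟩ : ∃ n : ℕ, (f : Equiv.Perm ℤ) t - (f : Equiv.Perm ℤ) u = 3 * n := by
      obtain ⟨m, hm⟩ : (3:ℤ) ∣ ((f : Equiv.Perm ℤ) t - (f : Equiv.Perm ℤ) u) := by omega
      exact ⟨m.toNat, by omega⟩
    have h2 : (f : Equiv.Perm ℤ) (u + 3 * n) = (f : Equiv.Perm ℤ) t := by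
      rw [aff_shift_nat]; omega
    have h3 : u + 3 * n = t := (f : Equiv.Perm ℤ).injective h2
    omega

set_option maxHeartbeats 2000000 in
lemma N_step (k : Fin 3) (f : Aff) : N (g k * f) ≤ N f + 1 := by
  have hcoe : ∀ t : ℤ, ((g k * f : Aff) : Equiv.Perm ℤ) t
      = sfun k ((f : Equiv.Perm ℤ) t) := by
    intro t
    rw [Subgroup.coe_mul, Equiv.Perm.mul_apply]
    rfl
  have h12 := aff_mod_ne f (show (1:ℤ) % 3 ≠ 2 % 3 by decide)
  have h13 := aff_mod_ne f (show (1:ℤ) % 3 ≠ 3 % 3 by decide)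
  have h23 := aff_mod_ne f (show (2:ℤ) % 3 ≠ 3 % 3 by decide)
  unfold N
  rw [hcoe, hcoe, hcoe]
  have s1 := sfun_spec k ((f : Equiv.Perm ℤ) 1)
  have s2 := sfun_spec k ((f : Equiv.Perm ℤ) 2)
  have s3 := sfun_spec k ((f : Equiv.Perm ℤ) 3)
  omega

section
variable {W : Type*} [Group W] {M : CoxeterMatrix (Fin 3)}
  (hM : ∀ i j : Fin 3, i ≠ j → M i j = 3) (cs : CoxeterSystem M W)

def phi (hM : ∀ i j : Fin 3, i ≠ j → M i j = 3) (cs : CoxeterSystem M W) : W →* Aff :=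
  cs.lift ⟨g, isLiftable hM⟩

lemma phi_simple (i : Fin 3) : phi hM cs (cs.simple i) = g i :=
  cs.lift_apply_simple (isLiftable hM) i

lemma phi_word (ω : List (Fin 3)) : phi hM cs (cs.wordProd ω) = (ω.map g).prod := by
  induction ω with
  | nil => rw [cs.wordProd_nil, map_one]; rfl
  | cons i ω ih => rw [cs.wordProd_cons, map_mul, phi_simple, List.map_cons, List.prod_cons, ih]

lemma N_le_length (w : W) : N (phi hM cs w) ≤ cs.length w := by
  obtain ⟨ω, hlen, rfl⟩ := cs.exists_reduced_word w
  rw [phi_word]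
  rw [hlen.eq]
  clear hlen
  induction ω with
  | nil => simp [N]
  | cons i ω ih =>
    rw [List.map_cons, List.prod_cons]
    calc N (g i * (ω.map g).prod) ≤ N ((ω.map g).prod) + 1 := N_step i _
      _ ≤ ω.length + 1 := by omega
      _ = (i :: ω).length := by simp

include hM in
lemma length_word_eq (ω : List (Fin 3)) (h : ω.length ≤ N ((ω.map g).prod)) :
    cs.length (cs.wordProd ω) = ω.length := by
  refine le_antisymm (cs.length_wordProd_le ω) ?_
  calc ω.length ≤ N ((ω.map g).prod) := h
    _ = N (phi hM cs (cs.wordProd ω)) := by rw [phi_word]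
    _ ≤ cs.length (cs.wordProd ω) := N_le_length hM cs _

end

example : N ((([0,1,0,2,0,1,0,2,1,0,1] : List (Fin 3)).map g).prod) = 11 := by decide
example : N ((([1,0,2,1,0,1] : List (Fin 3)).map g).prod) = 6 := by decide

end DemazureA2Aux



/-- Let `W` be the Coxeter group of affine type `A₂`: generators `s₁ = cs.simple 0`,
`s₂ = cs.simple 1`, `s₃ = cs.simple 2` with `sᵢ² = 1` and `(sᵢsⱼ)³ = 1` for `i ≠ j`.
Let `d` be the Demazure product and `f` the automorphism with `s₁* = s₂`, `s₂* = s₁`,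
`s₃* = s₃`. Then the map `π(w) = d w (f w)⁻¹` is not injective: the elements
`u = s₁s₂s₁s₃s₂s₁` and `v = s₁s₂s₁s₃s₁s₂` are distinct, yet `π(u) = π(v)`. -/
theorem demazure_pi_affine_A2_not_injective
    {W : Type*} [Group W] {M : CoxeterMatrix (Fin 3)}
    (hM : ∀ i j : Fin 3, i ≠ j → M i j = 3)
    (cs : CoxeterSystem M W)
    (d : W → W → W)
    (hd_assoc : ∀ u v w : W, d (d u v) w = d u (d v w))
    (hd_one_left : ∀ w : W, d 1 w = w)
    (hd_one_right : ∀ w : W, d w 1 = w)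
    (hd_simple_lt : ∀ i (w : W), cs.length (cs.simple i * w) = cs.length w + 1 →
      d (cs.simple i) w = cs.simple i * w)
    (hd_simple_gt : ∀ i (w : W), cs.length (cs.simple i * w) + 1 = cs.length w →
      d (cs.simple i) w = w)
    (f : W ≃* W)
    (hf0 : f (cs.simple 0) = cs.simple 1)
    (hf1 : f (cs.simple 1) = cs.simple 0)
    (hf2 : f (cs.simple 2) = cs.simple 2) :
    cs.simple 0 * cs.simple 1 * cs.simple 0 * cs.simple 2 * cs.simple 1 * cs.simple 0 ≠
      cs.simple 0 * cs.simple 1 * cs.simple 0 * cs.simple 2 * cs.simple 0 * cs.simple 1 ∧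
    d (cs.simple 0 * cs.simple 1 * cs.simple 0 * cs.simple 2 * cs.simple 1 * cs.simple 0)
        (f (cs.simple 0 * cs.simple 1 * cs.simple 0 * cs.simple 2 * cs.simple 1 *
          cs.simple 0))⁻¹ =
      d (cs.simple 0 * cs.simple 1 * cs.simple 0 * cs.simple 2 * cs.simple 0 * cs.simple 1)
        (f (cs.simple 0 * cs.simple 1 * cs.simple 0 * cs.simple 2 * cs.simple 0 *
          cs.simple 1))⁻¹ := by
  
  have Lw1 : cs.length (cs.wordProd [0]) = 1 :=
    DemazureA2Aux.length_word_eq hM cs [0] (by decide)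
  have Lw2 : cs.length (cs.wordProd [1,0]) = 2 :=
    DemazureA2Aux.length_word_eq hM cs [1,0] (by decide)
  have Lw3 : cs.length (cs.wordProd [2,1,0]) = 3 :=
    DemazureA2Aux.length_word_eq hM cs [2,1,0] (by decide)
  have Lw4 : cs.length (cs.wordProd [0,2,1,0]) = 4 :=
    DemazureA2Aux.length_word_eq hM cs [0,2,1,0] (by decide)
  have Lw5 : cs.length (cs.wordProd [1,0,2,1,0]) = 5 :=
    DemazureA2Aux.length_word_eq hM cs [1,0,2,1,0] (by decide)
  have Lw6 : cs.length (cs.wordProd [0,1,0,2,1,0]) = 6 :=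
    DemazureA2Aux.length_word_eq hM cs [0,1,0,2,1,0] (by decide)
  have Mw1 : cs.length (cs.wordProd [1]) = 1 :=
    DemazureA2Aux.length_word_eq hM cs [1] (by decide)
  have Mw2 : cs.length (cs.wordProd [0,1]) = 2 :=
    DemazureA2Aux.length_word_eq hM cs [0,1] (by decide)
  have Mw3 : cs.length (cs.wordProd [2,0,1]) = 3 :=
    DemazureA2Aux.length_word_eq hM cs [2,0,1] (by decide)
  have Mw4 : cs.length (cs.wordProd [0,2,0,1]) = 4 :=
    DemazureA2Aux.length_word_eq hM cs [0,2,0,1] (by decide)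
  have Mw5 : cs.length (cs.wordProd [1,0,2,0,1]) = 5 :=
    DemazureA2Aux.length_word_eq hM cs [1,0,2,0,1] (by decide)
  have Mw6 : cs.length (cs.wordProd [0,1,0,2,0,1]) = 6 :=
    DemazureA2Aux.length_word_eq hM cs [0,1,0,2,0,1] (by decide)
  have LA6 : cs.length (cs.wordProd [1,0,2,1,0,1]) = 6 :=
    DemazureA2Aux.length_word_eq hM cs [1,0,2,1,0,1] (by decide)
  have LA7 : cs.length (cs.wordProd [0,1,0,2,1,0,1]) = 7 :=
    DemazureA2Aux.length_word_eq hM cs [0,1,0,2,1,0,1] (by decide)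
  have LA8 : cs.length (cs.wordProd [2,0,1,0,2,1,0,1]) = 8 :=
    DemazureA2Aux.length_word_eq hM cs [2,0,1,0,2,1,0,1] (by decide)
  have LA9 : cs.length (cs.wordProd [0,2,0,1,0,2,1,0,1]) = 9 :=
    DemazureA2Aux.length_word_eq hM cs [0,2,0,1,0,2,1,0,1] (by decide)
  have LA10 : cs.length (cs.wordProd [1,0,2,0,1,0,2,1,0,1]) = 10 :=
    DemazureA2Aux.length_word_eq hM cs [1,0,2,0,1,0,2,1,0,1] (by decide)
  have LA11 : cs.length (cs.wordProd [0,1,0,2,0,1,0,2,1,0,1]) = 11 :=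
    DemazureA2Aux.length_word_eq hM cs [0,1,0,2,0,1,0,2,1,0,1] (by decide)
  have LB6 : cs.length (cs.wordProd [0,1,2,1,0,1]) = 6 :=
    DemazureA2Aux.length_word_eq hM cs [0,1,2,1,0,1] (by decide)
  have LB7 : cs.length (cs.wordProd [1,0,1,2,1,0,1]) = 7 :=
    DemazureA2Aux.length_word_eq hM cs [1,0,1,2,1,0,1] (by decide)
  have LB8 : cs.length (cs.wordProd [2,1,0,1,2,1,0,1]) = 8 :=
    DemazureA2Aux.length_word_eq hM cs [2,1,0,1,2,1,0,1] (by decide)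
  have LB9 : cs.length (cs.wordProd [0,2,1,0,1,2,1,0,1]) = 9 :=
    DemazureA2Aux.length_word_eq hM cs [0,2,1,0,1,2,1,0,1] (by decide)
  have LB10 : cs.length (cs.wordProd [1,0,2,1,0,1,2,1,0,1]) = 10 :=
    DemazureA2Aux.length_word_eq hM cs [1,0,2,1,0,1,2,1,0,1] (by decide)
  have LB11 : cs.length (cs.wordProd [0,1,0,2,1,0,1,2,1,0,1]) = 11 :=
    DemazureA2Aux.length_word_eq hM cs [0,1,0,2,1,0,1,2,1,0,1] (by decide)
  have hbr3 : (cs.simple 0 * cs.simple 1) ^ 3 = 1 := by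
    have h := cs.simple_mul_simple_pow 0 1
    rwa [hM 0 1 (by decide)] at h
  have h5 : (cs.simple 0 * (cs.simple 1 * cs.simple 0)) *
      (cs.simple 1 * (cs.simple 0 * cs.simple 1)) = 1 := by
    rw [← hbr3]; simp [pow_succ, mul_assoc]
  have h6 : (cs.simple 1 * (cs.simple 0 * cs.simple 1)) *
      (cs.simple 1 * (cs.simple 0 * cs.simple 1)) = 1 := by
    simp [mul_assoc, cs.simple_mul_simple_cancel_left, cs.simple_mul_simple_self]
  have hbr : cs.simple 0 * (cs.simple 1 * cs.simple 0)
      = cs.simple 1 * (cs.simple 0 * cs.simple 1) := mul_right_cancel (h5.trans h6.symm)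
  have key01 : ∀ X : W, cs.simple 0 * (cs.simple 1 * (cs.simple 0 * X))
      = cs.simple 1 * (cs.simple 0 * (cs.simple 1 * X)) := by
    intro X
    calc cs.simple 0 * (cs.simple 1 * (cs.simple 0 * X))
        = (cs.simple 0 * (cs.simple 1 * cs.simple 0)) * X := by simp [mul_assoc]
      _ = (cs.simple 1 * (cs.simple 0 * cs.simple 1)) * X := by rw [hbr]
      _ = cs.simple 1 * (cs.simple 0 * (cs.simple 1 * X)) := by simp [mul_assoc]
  have key1 : ∀ X : W, cs.simple 1 * (cs.simple 0 * (cs.simple 1 * (cs.simple 0 * X)))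
      = cs.simple 0 * (cs.simple 1 * X) := by
    intro X
    calc cs.simple 1 * (cs.simple 0 * (cs.simple 1 * (cs.simple 0 * X)))
        = (cs.simple 1 * (cs.simple 0 * cs.simple 1)) * (cs.simple 0 * X) := by
          simp [mul_assoc]
      _ = (cs.simple 0 * (cs.simple 1 * cs.simple 0)) * (cs.simple 0 * X) := by rw [hbr]
      _ = cs.simple 0 * (cs.simple 1 * X) := by
          simp [mul_assoc, cs.simple_mul_simple_cancel_left]
  have key2 : ∀ X : W, cs.simple 0 * (cs.simple 1 * (cs.simple 0 * (cs.simple 1 * X)))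
      = cs.simple 1 * (cs.simple 0 * X) := by
    intro X
    calc cs.simple 0 * (cs.simple 1 * (cs.simple 0 * (cs.simple 1 * X)))
        = (cs.simple 0 * (cs.simple 1 * cs.simple 0)) * (cs.simple 1 * X) := by
          simp [mul_assoc]
      _ = (cs.simple 1 * (cs.simple 0 * cs.simple 1)) * (cs.simple 1 * X) := by rw [hbr]
      _ = cs.simple 1 * (cs.simple 0 * X) := by
          simp [mul_assoc, cs.simple_mul_simple_cancel_left]
  have hU : cs.simple 0 * cs.simple 1 * cs.simple 0 * cs.simple 2 * cs.simple 1 * cs.simple 0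
      = cs.wordProd [0,1,0,2,1,0] := by
    simp [cs.wordProd_cons, mul_assoc]
  have hV : cs.simple 0 * cs.simple 1 * cs.simple 0 * cs.simple 2 * cs.simple 0 * cs.simple 1
      = cs.wordProd [0,1,0,2,0,1] := by
    simp [cs.wordProd_cons, mul_assoc]
  refine ⟨?_, ?_⟩
  · intro h
    rw [hU, hV] at h
    have h1 : DemazureA2Aux.phi hM cs (cs.wordProd [0,1,0,2,1,0])
        = DemazureA2Aux.phi hM cs (cs.wordProd [0,1,0,2,0,1]) := congrArg _ h
    rw [DemazureA2Aux.phi_word hM cs, DemazureA2Aux.phi_word hM cs] at h1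
    have h2 : (((([0,1,0,2,1,0] : List (Fin 3)).map DemazureA2Aux.g).prod : DemazureA2Aux.Aff)
          : Equiv.Perm ℤ) 1
        = (((([0,1,0,2,0,1] : List (Fin 3)).map DemazureA2Aux.g).prod : DemazureA2Aux.Aff)
          : Equiv.Perm ℤ) 1 := by rw [h1]
    exact absurd h2 (by decide)
  · have hfu : (f (cs.simple 0 * cs.simple 1 * cs.simple 0 * cs.simple 2 * cs.simple 1 *
          cs.simple 0))⁻¹ = cs.wordProd [1,0,2,1,0,1] := by
      simp only [map_mul, hf0, hf1, hf2, mul_inv_rev, cs.inv_simple]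
      simp [cs.wordProd_cons, mul_assoc]
    have hfv : (f (cs.simple 0 * cs.simple 1 * cs.simple 0 * cs.simple 2 * cs.simple 0 *
          cs.simple 1))⁻¹ = cs.wordProd [0,1,2,1,0,1] := by
      simp only [map_mul, hf0, hf1, hf2, mul_inv_rev, cs.inv_simple]
      simp [cs.wordProd_cons, mul_assoc]
    have nU2 : d (cs.simple 2) (cs.wordProd [1,0]) = cs.wordProd [2,1,0] :=
      (hd_simple_lt 2 (cs.wordProd [1,0])
        (by rw [← cs.wordProd_cons, Lw3, Lw2])).trans
        (cs.wordProd_cons 2 [1,0]).symm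
    have nU3 : d (cs.simple 0) (cs.wordProd [2,1,0]) = cs.wordProd [0,2,1,0] :=
      (hd_simple_lt 0 (cs.wordProd [2,1,0])
        (by rw [← cs.wordProd_cons, Lw4, Lw3])).trans
        (cs.wordProd_cons 0 [2,1,0]).symm
    have nU4 : d (cs.simple 1) (cs.wordProd [0,2,1,0]) = cs.wordProd [1,0,2,1,0] :=
      (hd_simple_lt 1 (cs.wordProd [0,2,1,0])
        (by rw [← cs.wordProd_cons, Lw5, Lw4])).trans
        (cs.wordProd_cons 1 [0,2,1,0]).symm
    have nU5 : d (cs.simple 0) (cs.wordProd [1,0,2,1,0]) = cs.wordProd [0,1,0,2,1,0] :=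
      (hd_simple_lt 0 (cs.wordProd [1,0,2,1,0])
        (by rw [← cs.wordProd_cons, Lw6, Lw5])).trans
        (cs.wordProd_cons 0 [1,0,2,1,0]).symm
    have nV2 : d (cs.simple 2) (cs.wordProd [0,1]) = cs.wordProd [2,0,1] :=
      (hd_simple_lt 2 (cs.wordProd [0,1])
        (by rw [← cs.wordProd_cons, Mw3, Mw2])).trans
        (cs.wordProd_cons 2 [0,1]).symm
    have nV3 : d (cs.simple 0) (cs.wordProd [2,0,1]) = cs.wordProd [0,2,0,1] :=
      (hd_simple_lt 0 (cs.wordProd [2,0,1])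
        (by rw [← cs.wordProd_cons, Mw4, Mw3])).trans
        (cs.wordProd_cons 0 [2,0,1]).symm
    have nV4 : d (cs.simple 1) (cs.wordProd [0,2,0,1]) = cs.wordProd [1,0,2,0,1] :=
      (hd_simple_lt 1 (cs.wordProd [0,2,0,1])
        (by rw [← cs.wordProd_cons, Mw5, Mw4])).trans
        (cs.wordProd_cons 1 [0,2,0,1]).symm
    have nV5 : d (cs.simple 0) (cs.wordProd [1,0,2,0,1]) = cs.wordProd [0,1,0,2,0,1] :=
      (hd_simple_lt 0 (cs.wordProd [1,0,2,0,1])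
        (by rw [← cs.wordProd_cons, Mw6, Mw5])).trans
        (cs.wordProd_cons 0 [1,0,2,0,1]).symm
    have nU1 : d (cs.simple 1) (cs.simple 0) = cs.wordProd [1,0] :=
      (hd_simple_lt 1 (cs.simple 0)
        (by rw [show cs.simple 1 * cs.simple 0 = cs.wordProd [1,0] from by
              simp [cs.wordProd_cons], Lw2, cs.length_simple])).trans
        (show cs.simple 1 * cs.simple 0 = cs.wordProd [1,0] from by simp [cs.wordProd_cons])
    have nV1 : d (cs.simple 0) (cs.simple 1) = cs.wordProd [0,1] :=
      (hd_simple_lt 0 (cs.simple 1)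
        (by rw [show cs.simple 0 * cs.simple 1 = cs.wordProd [0,1] from by
              simp [cs.wordProd_cons], Mw2, cs.length_simple])).trans
        (show cs.simple 0 * cs.simple 1 = cs.wordProd [0,1] from by simp [cs.wordProd_cons])
    have huN : d (cs.simple 0) (d (cs.simple 1) (d (cs.simple 0) (d (cs.simple 2)
        (d (cs.simple 1) (cs.simple 0))))) = cs.wordProd [0,1,0,2,1,0] := by
      rw [nU1, nU2, nU3, nU4, nU5]
    have hvN : d (cs.simple 0) (d (cs.simple 1) (d (cs.simple 0) (d (cs.simple 2)
        (d (cs.simple 0) (cs.simple 1))))) = cs.wordProd [0,1,0,2,0,1] := by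
      rw [nV1, nV2, nV3, nV4, nV5]
    have c1 : d (cs.simple 0) (cs.wordProd [1,0,2,1,0,1]) = cs.wordProd [0,1,0,2,1,0,1] :=
      (hd_simple_lt 0 (cs.wordProd [1,0,2,1,0,1])
        (by rw [← cs.wordProd_cons, LA7, LA6])).trans
        (cs.wordProd_cons 0 [1,0,2,1,0,1]).symm
    have c3 : d (cs.simple 2) (cs.wordProd [0,1,0,2,1,0,1]) = cs.wordProd [2,0,1,0,2,1,0,1] :=
      (hd_simple_lt 2 (cs.wordProd [0,1,0,2,1,0,1])
        (by rw [← cs.wordProd_cons, LA8, LA7])).trans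
        (cs.wordProd_cons 2 [0,1,0,2,1,0,1]).symm
    have c4 : d (cs.simple 0) (cs.wordProd [2,0,1,0,2,1,0,1]) = cs.wordProd [0,2,0,1,0,2,1,0,1] :=
      (hd_simple_lt 0 (cs.wordProd [2,0,1,0,2,1,0,1])
        (by rw [← cs.wordProd_cons, LA9, LA8])).trans
        (cs.wordProd_cons 0 [2,0,1,0,2,1,0,1]).symm
    have c5 : d (cs.simple 1) (cs.wordProd [0,2,0,1,0,2,1,0,1]) = cs.wordProd [1,0,2,0,1,0,2,1,0,1] :=
      (hd_simple_lt 1 (cs.wordProd [0,2,0,1,0,2,1,0,1])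
        (by rw [← cs.wordProd_cons, LA10, LA9])).trans
        (cs.wordProd_cons 1 [0,2,0,1,0,2,1,0,1]).symm
    have c6 : d (cs.simple 0) (cs.wordProd [1,0,2,0,1,0,2,1,0,1]) = cs.wordProd [0,1,0,2,0,1,0,2,1,0,1] :=
      (hd_simple_lt 0 (cs.wordProd [1,0,2,0,1,0,2,1,0,1])
        (by rw [← cs.wordProd_cons, LA11, LA10])).trans
        (cs.wordProd_cons 0 [1,0,2,0,1,0,2,1,0,1]).symm
    have c1' : d (cs.simple 1) (cs.wordProd [0,1,2,1,0,1]) = cs.wordProd [1,0,1,2,1,0,1] :=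
      (hd_simple_lt 1 (cs.wordProd [0,1,2,1,0,1])
        (by rw [← cs.wordProd_cons, LB7, LB6])).trans
        (cs.wordProd_cons 1 [0,1,2,1,0,1]).symm
    have c3' : d (cs.simple 2) (cs.wordProd [1,0,1,2,1,0,1]) = cs.wordProd [2,1,0,1,2,1,0,1] :=
      (hd_simple_lt 2 (cs.wordProd [1,0,1,2,1,0,1])
        (by rw [← cs.wordProd_cons, LB8, LB7])).trans
        (cs.wordProd_cons 2 [1,0,1,2,1,0,1]).symm
    have c4' : d (cs.simple 0) (cs.wordProd [2,1,0,1,2,1,0,1]) = cs.wordProd [0,2,1,0,1,2,1,0,1] :=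
      (hd_simple_lt 0 (cs.wordProd [2,1,0,1,2,1,0,1])
        (by rw [← cs.wordProd_cons, LB9, LB8])).trans
        (cs.wordProd_cons 0 [2,1,0,1,2,1,0,1]).symm
    have c5' : d (cs.simple 1) (cs.wordProd [0,2,1,0,1,2,1,0,1]) = cs.wordProd [1,0,2,1,0,1,2,1,0,1] :=
      (hd_simple_lt 1 (cs.wordProd [0,2,1,0,1,2,1,0,1])
        (by rw [← cs.wordProd_cons, LB10, LB9])).trans
        (cs.wordProd_cons 1 [0,2,1,0,1,2,1,0,1]).symm
    have c6' : d (cs.simple 0) (cs.wordProd [1,0,2,1,0,1,2,1,0,1]) = cs.wordProd [0,1,0,2,1,0,1,2,1,0,1] :=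
      (hd_simple_lt 0 (cs.wordProd [1,0,2,1,0,1,2,1,0,1])
        (by rw [← cs.wordProd_cons, LB11, LB10])).trans
        (cs.wordProd_cons 0 [1,0,2,1,0,1,2,1,0,1]).symm
    have c2 : d (cs.simple 1) (cs.wordProd [0,1,0,2,1,0,1]) = cs.wordProd [0,1,0,2,1,0,1] := by
      apply hd_simple_gt
      have hred : cs.simple 1 * cs.wordProd [0,1,0,2,1,0,1] = cs.wordProd [0,1,2,1,0,1] := by
        simp only [cs.wordProd_cons, cs.wordProd_nil, mul_one]
        exact key1 (cs.simple 2 * (cs.simple 1 * (cs.simple 0 * cs.simple 1)))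
      have hle : cs.length (cs.simple 1 * cs.wordProd [0,1,0,2,1,0,1]) ≤ 6 := by
        rw [hred]; exact cs.length_wordProd_le _
      have hdi := cs.length_simple_mul (cs.wordProd [0,1,0,2,1,0,1]) 1
      rw [LA7] at hdi
      rw [LA7]
      omega
    have c2' : d (cs.simple 0) (cs.wordProd [1,0,1,2,1,0,1]) = cs.wordProd [1,0,1,2,1,0,1] := by
      apply hd_simple_gt
      have hred : cs.simple 0 * cs.wordProd [1,0,1,2,1,0,1] = cs.wordProd [1,0,2,1,0,1] := by
        simp only [cs.wordProd_cons, cs.wordProd_nil, mul_one]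
        exact key2 (cs.simple 2 * (cs.simple 1 * (cs.simple 0 * cs.simple 1)))
      have hle : cs.length (cs.simple 0 * cs.wordProd [1,0,1,2,1,0,1]) ≤ 6 := by
        rw [hred]; exact cs.length_wordProd_le _
      have hdi := cs.length_simple_mul (cs.wordProd [1,0,1,2,1,0,1]) 0
      rw [LB7] at hdi
      rw [LB7]
      omega
    have final : cs.wordProd [0,1,0,2,0,1,0,2,1,0,1] = cs.wordProd [0,1,0,2,1,0,1,2,1,0,1] := by
      simp only [cs.wordProd_cons, cs.wordProd_nil, mul_one]
      rw [key01 (cs.simple 2 * (cs.simple 1 * (cs.simple 0 * cs.simple 1)))]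
    rw [hfu, hfv, hU, hV, ← huN, ← hvN]
    simp only [hd_assoc]
    rw [c1, c2, c3, c4, c5, c6, c1', c2', c3', c4', c5', c6']
    exact final
end
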